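/- Countermodel construction: for every template P = (Γ*, Δ*) induced by a search tree, the determined model m_P with the identity valuation 𝔳 satisfies m_P,𝔳 ⊨ A for all A ∈ Γ* and m_P,𝔳 ⊭ B for all B ∈ Δ*. -/

import Mathlib

set_option maxHeartbeats 1000000

/-! ### Syntax of PDL -/

mutual
inductive PDLFormula : Type
  | bot : PDLFormula
  | atom : ℕ → PDLFormula
  | and : PDLFormula → PDLFormula → PDLFormula
  | or : PDLFormula → PDLFormula → PDLFormula
  | imp : PDLFormula → PDLFormula → PDLFormula
  | box : PDLProgram → PDLFormula → PDLFormula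
  deriving DecidableEq

inductive PDLProgram : Type
  | atom : ℕ → PDLProgram
  | comp : PDLProgram → PDLProgram → PDLProgram
  | choice : PDLProgram → PDLProgram → PDLProgram
  | test : PDLFormula → PDLProgram
  | star : PDLProgram → PDLProgram
  deriving DecidableEq
end

/-! ### Semantics of PDL -/

structure PDLModel where
  State : Type
  propI : ℕ → Set State
  progI : ℕ → Set (State × State)

mutual
def PDLFormula.sem (m : PDLModel) : PDLFormula → Set m.State
  | .bot => ∅
  | .atom p => m.propI p
  | .and φ ψ => PDLFormula.sem m φ ∩ PDLFormula.sem m ψ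
  | .or φ ψ => PDLFormula.sem m φ ∪ PDLFormula.sem m ψ
  | .imp φ ψ => (PDLFormula.sem m φ)ᶜ ∪ PDLFormula.sem m ψ
  | .box α φ => { s | ∀ t, (s, t) ∈ PDLProgram.sem m α → t ∈ PDLFormula.sem m φ }

def PDLProgram.sem (m : PDLModel) : PDLProgram → Set (m.State × m.State)
  | .atom a => m.progI a
  | .comp α β => { p | ∃ t, (p.1, t) ∈ PDLProgram.sem m α ∧ (t, p.2) ∈ PDLProgram.sem m β }
  | .choice α β => PDLProgram.sem m α ∪ PDLProgram.sem m β
  | .test φ => { p | p.1 = p.2 ∧ p.1 ∈ PDLFormula.sem m φ }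
  | .star α => { p | Relation.ReflTransGen (fun s t => (s, t) ∈ PDLProgram.sem m α) p.1 p.2 }
end

/-! ### Labelled sequents -/

abbrev Label := ℕ

inductive SeqElem : Type
  | rel : Label → ℕ → Label → SeqElem
  | lab : Label → PDLFormula → SeqElem
  deriving DecidableEq

structure Sequent where
  ant : Finset SeqElem
  suc : Finset SeqElem

def SeqElem.sat (m : PDLModel) (v : Label → m.State) : SeqElem → Prop
  | .rel x a y => (v x, v y) ∈ m.progI a
  | .lab x φ => v x ∈ PDLFormula.sem m φ

def Sequent.valid (S : Sequent) : Prop :=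
  ∀ (m : PDLModel) (v : Label → m.State),
    (∀ A ∈ S.ant, A.sat m v) → ∃ B ∈ S.suc, B.sat m v

def Sequent.falsifiedBy (S : Sequent) (m : PDLModel) (v : Label → m.State) : Prop :=
  (∀ A ∈ S.ant, A.sat m v) ∧ ∀ B ∈ S.suc, ¬ B.sat m v

/-! ### Labels, starred labels, reachability -/

def SeqElem.labels : SeqElem → Finset Label
  | .rel x _ y => {x, y}
  | .lab x _ => {x}

def labs (Γ : Finset SeqElem) : Finset Label := Γ.biUnion SeqElem.labels

def starred (Δ : Finset SeqElem) : Set Label :=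
  { x | ∃ α φ, SeqElem.lab x (PDLFormula.box (PDLProgram.star α) φ) ∈ Δ }

def relStep (Γ : Finset SeqElem) (x y : Label) : Prop := ∃ a, SeqElem.rel x a y ∈ Γ

/-- `x` reaches `y` through a (possibly empty) chain of relational atoms of `Γ`. -/
def reaches (Γ : Finset SeqElem) : Label → Label → Prop := Relation.ReflTransGen (relStep Γ)

/-- A set of relational atoms is acyclic when no label reaches itself via a nonempty chain. -/
def RelAcyclic (Γ : Finset SeqElem) : Prop := ∀ x, ¬ Relation.TransGen (relStep Γ) x x

def Sequent.Acyclic (S : Sequent) : Prop := RelAcyclic S.ant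

/-! ### Classification of formulas, normal sequents -/

def PDLFormula.isAtomic : PDLFormula → Prop
  | .bot => True
  | .atom _ => True
  | _ => False

def PDLFormula.isIterated : PDLFormula → Prop
  | .box (.star _) _ => True
  | _ => False

def SeqElem.isRel : SeqElem → Prop
  | .rel _ _ _ => True
  | _ => False

def NormalSeq (S : Sequent) : Prop :=
  (∀ A ∈ S.ant, A ∉ S.suc) ∧
  (∀ A ∈ S.suc, ∃ x φ, A = SeqElem.lab x φ ∧ (φ.isAtomic ∨ φ.isIterated)) ∧
  (∀ A ∈ S.ant, A.isRel ∨ ∃ x φ, A = SeqElem.lab x φ ∧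
      (φ.isAtomic ∨ ∃ a ψ, φ = PDLFormula.box (PDLProgram.atom a) ψ ∧
        ∀ y, SeqElem.rel x a y ∉ S.ant))

/-! ### Test-freeness and subformulas -/

mutual
def PDLFormula.TestFree : PDLFormula → Prop
  | .bot => True
  | .atom _ => True
  | .and φ ψ => PDLFormula.TestFree φ ∧ PDLFormula.TestFree ψ
  | .or φ ψ => PDLFormula.TestFree φ ∧ PDLFormula.TestFree ψ
  | .imp φ ψ => PDLFormula.TestFree φ ∧ PDLFormula.TestFree ψ
  | .box α φ => PDLProgram.TestFree α ∧ PDLFormula.TestFree φ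

def PDLProgram.TestFree : PDLProgram → Prop
  | .atom _ => True
  | .comp α β => PDLProgram.TestFree α ∧ PDLProgram.TestFree β
  | .choice α β => PDLProgram.TestFree α ∧ PDLProgram.TestFree β
  | .test _ => False
  | .star α => PDLProgram.TestFree α
end

def SeqElem.TestFree : SeqElem → Prop
  | .rel _ _ _ => True
  | .lab _ φ => φ.TestFree

def Sequent.TestFree (S : Sequent) : Prop :=
  (∀ A ∈ S.ant, A.TestFree) ∧ (∀ A ∈ S.suc, A.TestFree)

mutual
inductive Subf : PDLFormula → PDLFormula → Prop
  | refl (φ) : Subf φ φ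
  | andl {χ φ ψ} : Subf χ φ → Subf χ (PDLFormula.and φ ψ)
  | andr {χ φ ψ} : Subf χ ψ → Subf χ (PDLFormula.and φ ψ)
  | orl {χ φ ψ} : Subf χ φ → Subf χ (PDLFormula.or φ ψ)
  | orr {χ φ ψ} : Subf χ ψ → Subf χ (PDLFormula.or φ ψ)
  | impl {χ φ ψ} : Subf χ φ → Subf χ (PDLFormula.imp φ ψ)
  | impr {χ φ ψ} : Subf χ ψ → Subf χ (PDLFormula.imp φ ψ)
  | boxf {χ α φ} : Subf χ φ → Subf χ (PDLFormula.box α φ)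
  | boxp {χ α φ} : SubfP χ α → Subf χ (PDLFormula.box α φ)

inductive SubfP : PDLFormula → PDLProgram → Prop
  | compl {χ α β} : SubfP χ α → SubfP χ (PDLProgram.comp α β)
  | compr {χ α β} : SubfP χ β → SubfP χ (PDLProgram.comp α β)
  | choicel {χ α β} : SubfP χ α → SubfP χ (PDLProgram.choice α β)
  | choicer {χ α β} : SubfP χ β → SubfP χ (PDLProgram.choice α β)
  | test {χ φ} : Subf χ φ → SubfP χ (PDLProgram.test φ)
  | star {χ α} : SubfP χ α → SubfP χ (PDLProgram.star α)
end

/-! ### Label substitution -/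

def substLabel (x y z : Label) : Label := if z = x then y else z

def SeqElem.subst (x y : Label) : SeqElem → SeqElem
  | .rel z a w => .rel (substLabel x y z) a (substLabel x y w)
  | .lab z φ => .lab (substLabel x y z) φ
/-! ### Trace values -/

structure TraceValue where
  label : Label
  spine : List PDLProgram
  focus : PDLProgram
  formula : PDLFormula
  deriving DecidableEq

/-- The labelled formula `x : [α₁]…[αₙ][β*]φ` denoted by a trace value. -/
def TraceValue.toFormula (τ : TraceValue) : PDLFormula :=
  τ.spine.foldr PDLFormula.box (PDLFormula.box (PDLProgram.star τ.focus) τ.formula)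

def TraceValue.toElem (τ : TraceValue) : SeqElem := SeqElem.lab τ.label τ.toFormula

/-- `[γ]τ`: prepend a program to the spine of a trace value. -/
def TraceValue.push (γ : PDLProgram) (τ : TraceValue) : TraceValue :=
  ⟨τ.label, γ :: τ.spine, τ.focus, τ.formula⟩

/-! ### Rule applications of G3PDL -/

inductive RuleApp : Type
  | ax (A : SeqElem)
  | botL (x : Label)
  | wl (A : SeqElem) (Γ Δ : Finset SeqElem)
  | wr (A : SeqElem) (Γ Δ : Finset SeqElem)
  | andL (x : Label) (φ ψ : PDLFormula) (Γ Δ : Finset SeqElem)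
  | andR (x : Label) (φ ψ : PDLFormula) (Γ Δ : Finset SeqElem)
  | orL (x : Label) (φ ψ : PDLFormula) (Γ Δ : Finset SeqElem)
  | orR (x : Label) (φ ψ : PDLFormula) (Γ Δ : Finset SeqElem)
  | impL (x : Label) (φ ψ : PDLFormula) (Γ Δ : Finset SeqElem)
  | impR (x : Label) (φ ψ : PDLFormula) (Γ Δ : Finset SeqElem)
  | boxL (x : Label) (a : ℕ) (y : Label) (φ : PDLFormula) (Γ Δ : Finset SeqElem)
  | boxR (x : Label) (a : ℕ) (y : Label) (φ : PDLFormula) (Γ Δ : Finset SeqElem)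
  | compL (x : Label) (α β : PDLProgram) (φ : PDLFormula) (Γ Δ : Finset SeqElem)
  | compR (x : Label) (α β : PDLProgram) (φ : PDLFormula) (Γ Δ : Finset SeqElem)
  | choiceL (x : Label) (α β : PDLProgram) (φ : PDLFormula) (Γ Δ : Finset SeqElem)
  | choiceR (x : Label) (α β : PDLProgram) (φ : PDLFormula) (Γ Δ : Finset SeqElem)
  | testL (x : Label) (φ ψ : PDLFormula) (Γ Δ : Finset SeqElem)
  | testR (x : Label) (φ ψ : PDLFormula) (Γ Δ : Finset SeqElem)
  | starL (x : Label) (α : PDLProgram) (φ : PDLFormula) (Γ Δ : Finset SeqElem)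
  | starR (x : Label) (α : PDLProgram) (φ : PDLFormula) (Γ Δ : Finset SeqElem)
  | subst (x y : Label) (Γ Δ : Finset SeqElem)
  | cut (A : SeqElem) (Γ Δ Γ₂ Δ₂ : Finset SeqElem)
  deriving DecidableEq

namespace RuleApp

/-- Conclusion of a rule application. -/
def conc : RuleApp → Sequent
  | ax A => ⟨{A}, {A}⟩
  | botL x => ⟨{SeqElem.lab x PDLFormula.bot}, ∅⟩
  | wl A Γ Δ => ⟨insert A Γ, Δ⟩
  | wr A Γ Δ => ⟨Γ, insert A Δ⟩
  | andL x φ ψ Γ Δ => ⟨insert (SeqElem.lab x (PDLFormula.and φ ψ)) Γ, Δ⟩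
  | andR x φ ψ Γ Δ => ⟨Γ, insert (SeqElem.lab x (PDLFormula.and φ ψ)) Δ⟩
  | orL x φ ψ Γ Δ => ⟨insert (SeqElem.lab x (PDLFormula.or φ ψ)) Γ, Δ⟩
  | orR x φ ψ Γ Δ => ⟨Γ, insert (SeqElem.lab x (PDLFormula.or φ ψ)) Δ⟩
  | impL x φ ψ Γ Δ => ⟨insert (SeqElem.lab x (PDLFormula.imp φ ψ)) Γ, Δ⟩
  | impR x φ ψ Γ Δ => ⟨Γ, insert (SeqElem.lab x (PDLFormula.imp φ ψ)) Δ⟩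
  | boxL x a y φ Γ Δ =>
      ⟨insert (SeqElem.lab x (PDLFormula.box (PDLProgram.atom a) φ)) (insert (SeqElem.rel x a y) Γ), Δ⟩
  | boxR x a _ φ Γ Δ => ⟨Γ, insert (SeqElem.lab x (PDLFormula.box (PDLProgram.atom a) φ)) Δ⟩
  | compL x α β φ Γ Δ => ⟨insert (SeqElem.lab x (PDLFormula.box (PDLProgram.comp α β) φ)) Γ, Δ⟩
  | compR x α β φ Γ Δ => ⟨Γ, insert (SeqElem.lab x (PDLFormula.box (PDLProgram.comp α β) φ)) Δ⟩
  | choiceL x α β φ Γ Δ => ⟨insert (SeqElem.lab x (PDLFormula.box (PDLProgram.choice α β) φ)) Γ, Δ⟩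
  | choiceR x α β φ Γ Δ => ⟨Γ, insert (SeqElem.lab x (PDLFormula.box (PDLProgram.choice α β) φ)) Δ⟩
  | testL x φ ψ Γ Δ => ⟨insert (SeqElem.lab x (PDLFormula.box (PDLProgram.test φ) ψ)) Γ, Δ⟩
  | testR x φ ψ Γ Δ => ⟨Γ, insert (SeqElem.lab x (PDLFormula.box (PDLProgram.test φ) ψ)) Δ⟩
  | starL x α φ Γ Δ => ⟨insert (SeqElem.lab x (PDLFormula.box (PDLProgram.star α) φ)) Γ, Δ⟩
  | starR x α φ Γ Δ => ⟨Γ, insert (SeqElem.lab x (PDLFormula.box (PDLProgram.star α) φ)) Δ⟩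
  | subst x y Γ Δ => ⟨Γ.image (SeqElem.subst x y), Δ.image (SeqElem.subst x y)⟩
  | cut _ Γ Δ Γ₂ Δ₂ => ⟨Γ ∪ Γ₂, Δ ∪ Δ₂⟩

/-- Premises of a rule application. -/
def prems : RuleApp → List Sequent
  | ax _ => []
  | botL _ => []
  | wl _ Γ Δ => [⟨Γ, Δ⟩]
  | wr _ Γ Δ => [⟨Γ, Δ⟩]
  | andL x φ ψ Γ Δ => [⟨insert (SeqElem.lab x φ) (insert (SeqElem.lab x ψ) Γ), Δ⟩]
  | andR x φ ψ Γ Δ => [⟨Γ, insert (SeqElem.lab x φ) Δ⟩, ⟨Γ, insert (SeqElem.lab x ψ) Δ⟩]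
  | orL x φ ψ Γ Δ => [⟨insert (SeqElem.lab x φ) Γ, Δ⟩, ⟨insert (SeqElem.lab x ψ) Γ, Δ⟩]
  | orR x φ ψ Γ Δ => [⟨Γ, insert (SeqElem.lab x φ) (insert (SeqElem.lab x ψ) Δ)⟩]
  | impL x φ ψ Γ Δ => [⟨Γ, insert (SeqElem.lab x φ) Δ⟩, ⟨insert (SeqElem.lab x ψ) Γ, Δ⟩]
  | impR x φ ψ Γ Δ => [⟨insert (SeqElem.lab x φ) Γ, insert (SeqElem.lab x ψ) Δ⟩]
  | boxL _ _ y φ Γ Δ => [⟨insert (SeqElem.lab y φ) Γ, Δ⟩]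
  | boxR x a y φ Γ Δ => [⟨insert (SeqElem.rel x a y) Γ, insert (SeqElem.lab y φ) Δ⟩]
  | compL x α β φ Γ Δ => [⟨insert (SeqElem.lab x (PDLFormula.box α (PDLFormula.box β φ))) Γ, Δ⟩]
  | compR x α β φ Γ Δ => [⟨Γ, insert (SeqElem.lab x (PDLFormula.box α (PDLFormula.box β φ))) Δ⟩]
  | choiceL x α β φ Γ Δ =>
      [⟨insert (SeqElem.lab x (PDLFormula.box α φ)) (insert (SeqElem.lab x (PDLFormula.box β φ)) Γ), Δ⟩]
  | choiceR x α β φ Γ Δ =>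
      [⟨Γ, insert (SeqElem.lab x (PDLFormula.box α φ)) Δ⟩, ⟨Γ, insert (SeqElem.lab x (PDLFormula.box β φ)) Δ⟩]
  | testL x φ ψ Γ Δ => [⟨Γ, insert (SeqElem.lab x φ) Δ⟩, ⟨insert (SeqElem.lab x ψ) Γ, Δ⟩]
  | testR x φ ψ Γ Δ => [⟨insert (SeqElem.lab x φ) Γ, insert (SeqElem.lab x ψ) Δ⟩]
  | starL x α φ Γ Δ =>
      [⟨insert (SeqElem.lab x φ)
          (insert (SeqElem.lab x (PDLFormula.box α (PDLFormula.box (PDLProgram.star α) φ))) Γ), Δ⟩]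
  | starR x α φ Γ Δ =>
      [⟨Γ, insert (SeqElem.lab x φ) Δ⟩,
       ⟨Γ, insert (SeqElem.lab x (PDLFormula.box α (PDLFormula.box (PDLProgram.star α) φ))) Δ⟩]
  | subst _ _ Γ Δ => [⟨Γ, Δ⟩]
  | cut A Γ Δ Γ₂ Δ₂ => [⟨Γ, insert A Δ⟩, ⟨insert A Γ₂, Δ₂⟩]

/-- Side conditions: the fresh-label condition of (□R). -/
def wf : RuleApp → Prop
  | boxR x _ y _ Γ Δ => y ∉ labs Γ ∧ y ∉ labs Δ ∧ y ≠ x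
  | _ => True

/-- `(τ, τ')` is a trace pair for (conclusion, `i`-th premise) of the rule application. -/
def tracePair : RuleApp → ℕ → TraceValue → TraceValue → Prop
  | ax _, _, _, _ => False
  | botL _, _, _, _ => False
  | wl _ _ Δ, i, τ, τ' => i = 0 ∧ τ.toElem ∈ Δ ∧ τ' = τ
  | wr _ _ Δ, i, τ, τ' => i = 0 ∧ τ.toElem ∈ Δ ∧ τ' = τ
  | andL _ _ _ _ Δ, i, τ, τ' => i = 0 ∧ τ.toElem ∈ Δ ∧ τ' = τ
  | andR _ _ _ _ Δ, i, τ, τ' => i < 2 ∧ τ.toElem ∈ Δ ∧ τ' = τ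
  | orL _ _ _ _ Δ, i, τ, τ' => i < 2 ∧ τ.toElem ∈ Δ ∧ τ' = τ
  | orR _ _ _ _ Δ, i, τ, τ' => i = 0 ∧ τ.toElem ∈ Δ ∧ τ' = τ
  | impL _ _ _ _ Δ, i, τ, τ' => i < 2 ∧ τ.toElem ∈ Δ ∧ τ' = τ
  | impR _ _ _ _ Δ, i, τ, τ' => i = 0 ∧ τ.toElem ∈ Δ ∧ τ' = τ
  | boxL _ _ _ _ _ Δ, i, τ, τ' => i = 0 ∧ τ.toElem ∈ Δ ∧ τ' = τ
  | boxR x a y φ _ Δ, i, τ, τ' => i = 0 ∧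
      ((τ.toElem ∈ Δ ∧ τ' = τ) ∨
       (τ'.toElem = SeqElem.lab y φ ∧
        τ = ⟨x, PDLProgram.atom a :: τ'.spine, τ'.focus, τ'.formula⟩))
  | compL _ _ _ _ _ Δ, i, τ, τ' => i = 0 ∧ τ.toElem ∈ Δ ∧ τ' = τ
  | compR x α β φ _ Δ, i, τ, τ' => i = 0 ∧
      ((τ.toElem ∈ Δ ∧ τ' = τ) ∨
       (∃ σ : TraceValue, σ.toElem = SeqElem.lab x φ ∧
          τ = σ.push (PDLProgram.comp α β) ∧ τ' = (σ.push β).push α))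
  | choiceL _ _ _ _ _ Δ, i, τ, τ' => i = 0 ∧ τ.toElem ∈ Δ ∧ τ' = τ
  | choiceR x α β φ _ Δ, i, τ, τ' => i < 2 ∧
      ((τ.toElem ∈ Δ ∧ τ' = τ) ∨
       (∃ σ : TraceValue, σ.toElem = SeqElem.lab x φ ∧
          τ = σ.push (PDLProgram.choice α β) ∧ τ' = σ.push (if i = 0 then α else β)))
  | testL _ _ _ _ Δ, i, τ, τ' => i < 2 ∧ τ.toElem ∈ Δ ∧ τ' = τ
  | testR x φ ψ _ Δ, i, τ, τ' => i = 0 ∧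
      ((τ.toElem ∈ Δ ∧ τ' = τ) ∨
       (τ'.toElem = SeqElem.lab x ψ ∧ τ = τ'.push (PDLProgram.test φ)))
  | starL _ _ _ _ Δ, i, τ, τ' => i = 0 ∧ τ.toElem ∈ Δ ∧ τ' = τ
  | starR x α φ _ Δ, i, τ, τ' =>
      (i = 0 ∧ ((τ.toElem ∈ Δ ∧ τ' = τ) ∨
         (τ'.toElem = SeqElem.lab x φ ∧ τ = τ'.push (PDLProgram.star α)))) ∨
      (i = 1 ∧ ((τ.toElem ∈ Δ ∧ τ' = τ) ∨
         (τ.toElem = SeqElem.lab x (PDLFormula.box (PDLProgram.star α) φ) ∧ τ' = τ.push α)))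
  | subst x y _ Δ, i, τ, τ' => i = 0 ∧ τ'.toElem ∈ Δ ∧
      τ = ⟨substLabel x y τ'.label, τ'.spine, τ'.focus, τ'.formula⟩
  | cut _ _ Δ _ Δ₂, i, τ, τ' =>
      (i = 0 ∧ τ.toElem ∈ Δ ∧ τ' = τ) ∨ (i = 1 ∧ τ.toElem ∈ Δ₂ ∧ τ' = τ)

/-- Progressing trace pairs: the principal formula of a (∗R) right premise with empty spine. -/
def progressing : RuleApp → ℕ → TraceValue → TraceValue → Prop
  | starR x α φ _ _, i, τ, τ' => i = 1 ∧ τ = ⟨x, [], α, φ⟩ ∧ τ' = τ.push α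
  | _, _, _, _ => False

/-! #### Classification of rule applications -/

def isCut : RuleApp → Prop | cut _ _ _ _ _ => True | _ => False
def isSubst : RuleApp → Prop | subst _ _ _ _ => True | _ => False
def isWeak : RuleApp → Prop | wl _ _ _ => True | wr _ _ _ => True | _ => False

/-- Rules allowed when closing a leaf: weakenings, (Ax) and (⊥). -/
def isClosing : RuleApp → Prop
  | wl _ _ _ => True | wr _ _ _ => True | ax _ => True | botL _ => True | _ => False

/-- The logical rules: all rules except weakening, (Subst) and (Cut). -/
def isLogical : RuleApp → Prop
  | wl _ _ _ => False | wr _ _ _ => False | subst _ _ _ _ => False | cut _ _ _ _ _ => False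
  | _ => True

/-- The left logical rules. -/
def isLeftLogical : RuleApp → Prop
  | andL _ _ _ _ _ => True | orL _ _ _ _ _ => True | impL _ _ _ _ _ => True
  | boxL _ _ _ _ _ _ => True | compL _ _ _ _ _ _ => True | choiceL _ _ _ _ _ _ => True
  | testL _ _ _ _ _ => True | starL _ _ _ _ _ => True
  | _ => False

/-- The rule instance consumes its principal labelled formula (it does not also occur in the
context), and (for □L) preserves the relational atom. -/
def consumes : RuleApp → Prop
  | andL x φ ψ Γ _ => SeqElem.lab x (PDLFormula.and φ ψ) ∉ Γ
  | andR x φ ψ _ Δ => SeqElem.lab x (PDLFormula.and φ ψ) ∉ Δ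
  | orL x φ ψ Γ _ => SeqElem.lab x (PDLFormula.or φ ψ) ∉ Γ
  | orR x φ ψ _ Δ => SeqElem.lab x (PDLFormula.or φ ψ) ∉ Δ
  | impL x φ ψ Γ _ => SeqElem.lab x (PDLFormula.imp φ ψ) ∉ Γ
  | impR x φ ψ _ Δ => SeqElem.lab x (PDLFormula.imp φ ψ) ∉ Δ
  | boxL x a y φ Γ _ =>
      SeqElem.lab x (PDLFormula.box (PDLProgram.atom a) φ) ∉ Γ ∧ SeqElem.rel x a y ∈ Γ
  | boxR x a _ φ _ Δ => SeqElem.lab x (PDLFormula.box (PDLProgram.atom a) φ) ∉ Δ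
  | compL x α β φ Γ _ => SeqElem.lab x (PDLFormula.box (PDLProgram.comp α β) φ) ∉ Γ
  | compR x α β φ _ Δ => SeqElem.lab x (PDLFormula.box (PDLProgram.comp α β) φ) ∉ Δ
  | choiceL x α β φ Γ _ => SeqElem.lab x (PDLFormula.box (PDLProgram.choice α β) φ) ∉ Γ
  | choiceR x α β φ _ Δ => SeqElem.lab x (PDLFormula.box (PDLProgram.choice α β) φ) ∉ Δ
  | testL x φ ψ Γ _ => SeqElem.lab x (PDLFormula.box (PDLProgram.test φ) ψ) ∉ Γ
  | testR x φ ψ _ Δ => SeqElem.lab x (PDLFormula.box (PDLProgram.test φ) ψ) ∉ Δ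
  | starL x α φ Γ _ => SeqElem.lab x (PDLFormula.box (PDLProgram.star α) φ) ∉ Γ
  | starR x α φ _ Δ => SeqElem.lab x (PDLFormula.box (PDLProgram.star α) φ) ∉ Δ
  | _ => True

/-- `B` (in the antecedent of the `i`-th premise) is an immediate ancestor of `A`
(in the antecedent of the conclusion). -/
def antAncestor : RuleApp → ℕ → SeqElem → SeqElem → Prop
  | ax _, _, _, _ => False
  | botL _, _, _, _ => False
  | wl _ Γ _, i, A, B => i = 0 ∧ A ∈ Γ ∧ B = A
  | wr _ Γ _, i, A, B => i = 0 ∧ A ∈ Γ ∧ B = A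
  | andL x φ ψ Γ _, i, A, B => i = 0 ∧
      ((A ∈ Γ ∧ B = A) ∨
       (A = SeqElem.lab x (PDLFormula.and φ ψ) ∧ (B = SeqElem.lab x φ ∨ B = SeqElem.lab x ψ)))
  | andR _ _ _ Γ _, i, A, B => i < 2 ∧ A ∈ Γ ∧ B = A
  | orL x φ ψ Γ _, i, A, B => i < 2 ∧
      ((A ∈ Γ ∧ B = A) ∨
       (A = SeqElem.lab x (PDLFormula.or φ ψ) ∧ B = SeqElem.lab x (if i = 0 then φ else ψ)))
  | orR _ _ _ Γ _, i, A, B => i = 0 ∧ A ∈ Γ ∧ B = A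
  | impL x φ ψ Γ _, i, A, B =>
      (i = 0 ∧ A ∈ Γ ∧ B = A) ∨
      (i = 1 ∧ ((A ∈ Γ ∧ B = A) ∨
        (A = SeqElem.lab x (PDLFormula.imp φ ψ) ∧ B = SeqElem.lab x ψ)))
  | impR _ _ _ Γ _, i, A, B => i = 0 ∧ A ∈ Γ ∧ B = A
  | boxL x a y φ Γ _, i, A, B => i = 0 ∧
      ((A ∈ Γ ∧ B = A) ∨
       (A = SeqElem.lab x (PDLFormula.box (PDLProgram.atom a) φ) ∧ B = SeqElem.lab y φ))
  | boxR _ _ _ _ Γ _, i, A, B => i = 0 ∧ A ∈ Γ ∧ B = A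
  | compL x α β φ Γ _, i, A, B => i = 0 ∧
      ((A ∈ Γ ∧ B = A) ∨
       (A = SeqElem.lab x (PDLFormula.box (PDLProgram.comp α β) φ) ∧
        B = SeqElem.lab x (PDLFormula.box α (PDLFormula.box β φ))))
  | compR _ _ _ _ Γ _, i, A, B => i = 0 ∧ A ∈ Γ ∧ B = A
  | choiceL x α β φ Γ _, i, A, B => i = 0 ∧
      ((A ∈ Γ ∧ B = A) ∨
       (A = SeqElem.lab x (PDLFormula.box (PDLProgram.choice α β) φ) ∧
        (B = SeqElem.lab x (PDLFormula.box α φ) ∨ B = SeqElem.lab x (PDLFormula.box β φ))))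
  | choiceR _ _ _ _ Γ _, i, A, B => i < 2 ∧ A ∈ Γ ∧ B = A
  | testL x φ ψ Γ _, i, A, B =>
      (i = 0 ∧ A ∈ Γ ∧ B = A) ∨
      (i = 1 ∧ ((A ∈ Γ ∧ B = A) ∨
        (A = SeqElem.lab x (PDLFormula.box (PDLProgram.test φ) ψ) ∧ B = SeqElem.lab x ψ)))
  | testR _ _ _ Γ _, i, A, B => i = 0 ∧ A ∈ Γ ∧ B = A
  | starL x α φ Γ _, i, A, B => i = 0 ∧
      ((A ∈ Γ ∧ B = A) ∨
       (A = SeqElem.lab x (PDLFormula.box (PDLProgram.star α) φ) ∧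
        (B = SeqElem.lab x φ ∨
         B = SeqElem.lab x (PDLFormula.box α (PDLFormula.box (PDLProgram.star α) φ)))))
  | starR _ _ _ Γ _, i, A, B => i < 2 ∧ A ∈ Γ ∧ B = A
  | subst x y Γ _, i, A, B => i = 0 ∧ B ∈ Γ ∧ A = B.subst x y
  | cut _ Γ _ Γ₂ _, i, A, B =>
      (i = 0 ∧ A ∈ Γ ∧ B = A) ∨ (i = 1 ∧ A ∈ Γ₂ ∧ B = A)

/-- `B` (in the consequent of the `i`-th premise) is an immediate ancestor of `A`
(in the consequent of the conclusion). -/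
def sucAncestor : RuleApp → ℕ → SeqElem → SeqElem → Prop
  | ax _, _, _, _ => False
  | botL _, _, _, _ => False
  | wl _ _ Δ, i, A, B => i = 0 ∧ A ∈ Δ ∧ B = A
  | wr _ _ Δ, i, A, B => i = 0 ∧ A ∈ Δ ∧ B = A
  | andL _ _ _ _ Δ, i, A, B => i = 0 ∧ A ∈ Δ ∧ B = A
  | andR x φ ψ _ Δ, i, A, B => i < 2 ∧
      ((A ∈ Δ ∧ B = A) ∨
       (A = SeqElem.lab x (PDLFormula.and φ ψ) ∧ B = SeqElem.lab x (if i = 0 then φ else ψ)))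
  | orL _ _ _ _ Δ, i, A, B => i < 2 ∧ A ∈ Δ ∧ B = A
  | orR x φ ψ _ Δ, i, A, B => i = 0 ∧
      ((A ∈ Δ ∧ B = A) ∨
       (A = SeqElem.lab x (PDLFormula.or φ ψ) ∧ (B = SeqElem.lab x φ ∨ B = SeqElem.lab x ψ)))
  | impL _ _ _ _ Δ, i, A, B => i < 2 ∧ A ∈ Δ ∧ B = A
  | impR x φ ψ _ Δ, i, A, B => i = 0 ∧
      ((A ∈ Δ ∧ B = A) ∨ (A = SeqElem.lab x (PDLFormula.imp φ ψ) ∧ B = SeqElem.lab x ψ))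
  | boxL _ _ _ _ _ Δ, i, A, B => i = 0 ∧ A ∈ Δ ∧ B = A
  | boxR x a y φ _ Δ, i, A, B => i = 0 ∧
      ((A ∈ Δ ∧ B = A) ∨
       (A = SeqElem.lab x (PDLFormula.box (PDLProgram.atom a) φ) ∧ B = SeqElem.lab y φ))
  | compL _ _ _ _ _ Δ, i, A, B => i = 0 ∧ A ∈ Δ ∧ B = A
  | compR x α β φ _ Δ, i, A, B => i = 0 ∧
      ((A ∈ Δ ∧ B = A) ∨
       (A = SeqElem.lab x (PDLFormula.box (PDLProgram.comp α β) φ) ∧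
        B = SeqElem.lab x (PDLFormula.box α (PDLFormula.box β φ))))
  | choiceL _ _ _ _ _ Δ, i, A, B => i = 0 ∧ A ∈ Δ ∧ B = A
  | choiceR x α β φ _ Δ, i, A, B => i < 2 ∧
      ((A ∈ Δ ∧ B = A) ∨
       (A = SeqElem.lab x (PDLFormula.box (PDLProgram.choice α β) φ) ∧
        B = SeqElem.lab x (PDLFormula.box (if i = 0 then α else β) φ)))
  | testL _ _ _ _ Δ, i, A, B => i < 2 ∧ A ∈ Δ ∧ B = A
  | testR x φ ψ _ Δ, i, A, B => i = 0 ∧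
      ((A ∈ Δ ∧ B = A) ∨
       (A = SeqElem.lab x (PDLFormula.box (PDLProgram.test φ) ψ) ∧ B = SeqElem.lab x ψ))
  | starL _ _ _ _ Δ, i, A, B => i = 0 ∧ A ∈ Δ ∧ B = A
  | starR x α φ _ Δ, i, A, B => i < 2 ∧
      ((A ∈ Δ ∧ B = A) ∨
       (A = SeqElem.lab x (PDLFormula.box (PDLProgram.star α) φ) ∧
        B = SeqElem.lab x (if i = 0 then φ
              else PDLFormula.box α (PDLFormula.box (PDLProgram.star α) φ))))
  | subst x y _ Δ, i, A, B => i = 0 ∧ B ∈ Δ ∧ A = B.subst x y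
  | cut _ _ Δ _ Δ₂, i, A, B =>
      (i = 0 ∧ A ∈ Δ ∧ B = A) ∨ (i = 1 ∧ A ∈ Δ₂ ∧ B = A)

end RuleApp
/-! ### Derivations: possibly infinite trees of rule applications, with open leaves -/

/-- A node of a derivation: either a rule application, or an open leaf with its sequent. -/
abbrev DNode := Sum RuleApp Sequent

def DNode.concl : DNode → Sequent := Sum.elim RuleApp.conc id

/-- A (possibly infinite, possibly open) derivation, presented as an assignment of nodes to
the addresses (lists of child indices) of an infinitely-branching tree. -/
structure Deriv where
  node : List ℕ → Option DNode
  wf_rule : ∀ p r, node p = some (Sum.inl r) → r.wf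
  children : ∀ p r, node p = some (Sum.inl r) →
      ∀ i, (node (p ++ [i])).map DNode.concl = r.prems[i]?
  leaf_no_children : ∀ p S, node p = some (Sum.inr S) → ∀ i, node (p ++ [i]) = none
  tree_closed : ∀ p i, node p = none → node (p ++ [i]) = none

namespace Deriv

def ruleAt (D : Deriv) (p : List ℕ) : Option RuleApp :=
  match D.node p with
  | some (Sum.inl r) => some r
  | _ => none

def openAt (D : Deriv) (p : List ℕ) : Option Sequent :=
  match D.node p with
  | some (Sum.inr S) => some S
  | _ => none

def seqAt (D : Deriv) (p : List ℕ) : Option Sequent := (D.node p).map DNode.concl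

def Finite (D : Deriv) : Prop := { p | (D.node p).isSome }.Finite

def NoOpen (D : Deriv) : Prop := ∀ p S, D.node p ≠ some (Sum.inr S)

end Deriv

/-! ### Infinite paths, traces and the global trace condition -/

/-- The address of the `n`-th node on the infinite branch determined by the sequence `f` of
child indices. -/
def pathAddr (f : ℕ → ℕ) (n : ℕ) : List ℕ := (List.range n).map f

/-- `f` determines an infinite path in the derivation tree whose rules are given by `R`. -/
def IsInfPath (R : List ℕ → Option RuleApp) (f : ℕ → ℕ) : Prop :=
  ∀ n, (R (pathAddr f n)).isSome

/-- The infinite path determined by `f` is followed (from some point `N` on) by an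
infinitely progressing trace. -/
def FollowedByProgTrace (R : List ℕ → Option RuleApp) (f : ℕ → ℕ) : Prop :=
  ∃ (N : ℕ) (g : ℕ → TraceValue),
    (∀ k, ∃ r, R (pathAddr f (N + k)) = some r ∧
        RuleApp.tracePair r (f (N + k)) (g k) (g (k + 1))) ∧
    (∀ m, ∃ k, m ≤ k ∧ ∃ r, R (pathAddr f (N + k)) = some r ∧
        RuleApp.progressing r (f (N + k)) (g k) (g (k + 1)))

/-- The global trace condition. -/
def GTC (R : List ℕ → Option RuleApp) : Prop :=
  ∀ f, IsInfPath R f → FollowedByProgTrace R f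

/-- A `G3PDL∞` proof of `S`: a pre-proof (derivation without open leaves) whose root sequent is
`S` and which satisfies the global trace condition. -/
def Deriv.IsProofOf (D : Deriv) (S : Sequent) : Prop :=
  D.seqAt [] = some S ∧ D.NoOpen ∧ GTC D.ruleAt

/-! ### Finite traces along finite paths in a derivation -/

/-- `tr` is a trace covering the path from the node at address `base` to the node at address
`base ++ tail`. -/
def CoversFrom (D : Deriv) (base tail : List ℕ) (tr : List TraceValue) : Prop :=
  tr.length = tail.length + 1 ∧
  ∀ i r j τ τ', D.ruleAt (base ++ tail.take i) = some r → tail[i]? = some j →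
    tr[i]? = some τ → tr[i + 1]? = some τ' → RuleApp.tracePair r j τ τ'

/-- The trace `tr` covering the path from `base` along `tail` progresses at position `i`. -/
def ProgAtFrom (D : Deriv) (base tail : List ℕ) (tr : List TraceValue) (i : ℕ) : Prop :=
  ∃ r j τ τ', D.ruleAt (base ++ tail.take i) = some r ∧ tail[i]? = some j ∧
    tr[i]? = some τ ∧ tr[i + 1]? = some τ' ∧ RuleApp.progressing r j τ τ'

/-! ### Cyclic derivations and their unfoldings -/

/-- Dereference an address: at an ordinary node stay put, at a bud jump to its companion. -/
def Deriv.deref (D : Deriv) (c : List ℕ → Option (List ℕ)) (p : List ℕ) : Option (List ℕ) :=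
  match D.node p with
  | some (Sum.inl _) => some p
  | some (Sum.inr _) => c p
  | none => none

/-- The address (in the finite tree) of the node corresponding to the address `p` of the
infinite unfolding. -/
def Deriv.unfoldAddr (D : Deriv) (c : List ℕ → Option (List ℕ)) (p : List ℕ) :
    Option (List ℕ) :=
  p.foldl (fun q i => q.bind fun q' => D.deref c (q' ++ [i])) (D.deref c [])

/-- The rule applied at address `p` of the infinite unfolding of the cyclic derivation. -/
def Deriv.unfoldRule (D : Deriv) (c : List ℕ → Option (List ℕ)) (p : List ℕ) :
    Option RuleApp :=
  (D.unfoldAddr c p).bind fun q => D.ruleAt q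

/-- Each bud assigned a companion must be assigned an internal node carrying a syntactically
identical sequent. -/
def CompanionCond (D : Deriv) (c : List ℕ → Option (List ℕ)) : Prop :=
  ∀ p S, D.node p = some (Sum.inr S) →
    ∀ q, c p = some q → ∃ r, D.node q = some (Sum.inl r) ∧ RuleApp.conc r = S

/-- Every bud is assigned a companion. -/
def FullCompanion (D : Deriv) (c : List ℕ → Option (List ℕ)) : Prop :=
  ∀ p S, D.node p = some (Sum.inr S) → ∃ q, c p = some q

/-- `S` is derivable in the cyclic system `G3PDLω`: there is a finite derivation tree, with each
bud assigned a companion, whose infinite unfolding satisfies the global trace condition. -/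
def CyclicDerivable (S : Sequent) : Prop :=
  ∃ (D : Deriv) (c : List ℕ → Option (List ℕ)),
    D.seqAt [] = some S ∧ D.Finite ∧ CompanionCond D c ∧ FullCompanion D c ∧
    GTC (D.unfoldRule c)

/-! ### Search trees -/

/-- A sequent that can be closed by weakenings leading to (⊥) or an axiom. -/
def closable (S : Sequent) : Prop :=
  (∃ x, SeqElem.lab x PDLFormula.bot ∈ S.ant) ∨ ∃ A, A ∈ S.ant ∧ A ∈ S.suc

/-- The subtree rooted at `p` is a finite closed derivation using only weakening rules,
(Ax) and (⊥). -/
def ClosingSubtreeAt (D : Deriv) (p : List ℕ) : Prop :=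
  (∀ q r, D.ruleAt (p ++ q) = some r → RuleApp.isClosing r) ∧
  (∀ q, D.openAt (p ++ q) = none) ∧
  { q | (D.node (p ++ q)).isSome }.Finite

def PDLFormula.isNonAtomic (φ : PDLFormula) : Prop := ¬ φ.isAtomic

/-- A schedule: an enumeration of labelled non-atomic formulas in which each labelled
non-atomic formula occurs infinitely often. -/
def IsSchedule (σ : ℕ → Label × PDLFormula) : Prop :=
  (∀ n, (σ n).2.isNonAtomic) ∧
  ∀ (x : Label) (φ : PDLFormula), φ.isNonAtomic → ∀ n, ∃ m, n ≤ m ∧ σ m = (x, φ)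

/-- The schedule element `(x, φ)` triggers a rule application at the sequent `S`. -/
def SchedApplies (x : Label) (φ : PDLFormula) (S : Sequent) : Prop :=
  SeqElem.lab x φ ∈ S.suc ∨
  (SeqElem.lab x φ ∈ S.ant ∧
    match φ with
    | PDLFormula.box (PDLProgram.atom a) _ => ∃ y, SeqElem.rel x a y ∈ S.ant
    | _ => True)

/-- The rule applied by the search tree when `x : φ` is scheduled and occurs in the
consequent of `S`. -/
def schedRuleSuc (x : Label) (φ : PDLFormula) (S : Sequent) (r : RuleApp) : Prop :=
  match φ with
  | PDLFormula.and φ₁ φ₂ => r = RuleApp.andR x φ₁ φ₂ S.ant S.suc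
  | PDLFormula.or φ₁ φ₂ => r = RuleApp.orR x φ₁ φ₂ S.ant S.suc
  | PDLFormula.imp φ₁ φ₂ => r = RuleApp.impR x φ₁ φ₂ S.ant S.suc
  | PDLFormula.box (PDLProgram.atom a) ψ => ∃ y, r = RuleApp.boxR x a y ψ S.ant S.suc
  | PDLFormula.box (PDLProgram.comp α β) ψ => r = RuleApp.compR x α β ψ S.ant S.suc
  | PDLFormula.box (PDLProgram.choice α β) ψ => r = RuleApp.choiceR x α β ψ S.ant S.suc
  | PDLFormula.box (PDLProgram.test χ) ψ => r = RuleApp.testR x χ ψ S.ant S.suc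
  | PDLFormula.box (PDLProgram.star α) ψ => r = RuleApp.starR x α ψ S.ant S.suc
  | _ => False

/-- The rule applied by the search tree when `x : φ` is scheduled and occurs in the
antecedent of `S` (the case of a basic modality `[a]ψ` is handled by a chain of (□L)
applications instead). -/
def schedRuleAnt (x : Label) (φ : PDLFormula) (S : Sequent) (r : RuleApp) : Prop :=
  match φ with
  | PDLFormula.and φ₁ φ₂ => r = RuleApp.andL x φ₁ φ₂ S.ant S.suc
  | PDLFormula.or φ₁ φ₂ => r = RuleApp.orL x φ₁ φ₂ S.ant S.suc
  | PDLFormula.imp φ₁ φ₂ => r = RuleApp.impL x φ₁ φ₂ S.ant S.suc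
  | PDLFormula.box (PDLProgram.comp α β) ψ => r = RuleApp.compL x α β ψ S.ant S.suc
  | PDLFormula.box (PDLProgram.choice α β) ψ => r = RuleApp.choiceL x α β ψ S.ant S.suc
  | PDLFormula.box (PDLProgram.test χ) ψ => r = RuleApp.testL x χ ψ S.ant S.suc
  | PDLFormula.box (PDLProgram.star α) ψ => r = RuleApp.starL x α ψ S.ant S.suc
  | _ => False

/-- The search-tree step performed at a non-closable node `p` carrying the sequent `S`:
either we are in the middle of a (□L)-chain (recorded by `pend`), or the next applicable
schedule entry `j ≥ st p` is applied (advancing the stage to `j + 1`), or no schedule entry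
ever applies again and the node is an open leaf. -/
def SearchStepAt (σ : ℕ → Label × PDLFormula) (D : Deriv)
    (st : List ℕ → ℕ) (pend : List ℕ → List Label) (p : List ℕ) (S : Sequent) : Prop :=
  (∃ x a ψ y rest, pend p = y :: rest ∧
     σ (st p) = (x, PDLFormula.box (PDLProgram.atom a) ψ) ∧
     SeqElem.lab x (PDLFormula.box (PDLProgram.atom a) ψ) ∈ S.ant ∧
     SeqElem.rel x a y ∈ S.ant ∧
     D.node p = some (Sum.inl (RuleApp.boxL x a y ψ S.ant S.suc)) ∧
     pend (p ++ [0]) = rest ∧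
     st (p ++ [0]) = (if rest = [] then st p + 1 else st p)) ∨
  (pend p = [] ∧
    ((∃ j, st p ≤ j ∧ SchedApplies (σ j).1 (σ j).2 S ∧
        (∀ j', st p ≤ j' → j' < j → ¬ SchedApplies (σ j').1 (σ j').2 S) ∧
        ((SeqElem.lab (σ j).1 (σ j).2 ∈ S.suc ∧
           ∃ r, D.node p = some (Sum.inl r) ∧ schedRuleSuc (σ j).1 (σ j).2 S r ∧
             (∀ i, st (p ++ [i]) = j + 1 ∧ pend (p ++ [i]) = [])) ∨
         (SeqElem.lab (σ j).1 (σ j).2 ∉ S.suc ∧ SeqElem.lab (σ j).1 (σ j).2 ∈ S.ant ∧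
           ((∃ a ψ, (σ j).2 = PDLFormula.box (PDLProgram.atom a) ψ ∧
              ∃ (y : Label) (rest : List Label), (y :: rest).Nodup ∧
                (∀ z, z ∈ y :: rest ↔ SeqElem.rel (σ j).1 a z ∈ S.ant) ∧
                D.node p = some (Sum.inl (RuleApp.boxL (σ j).1 a y ψ S.ant S.suc)) ∧
                pend (p ++ [0]) = rest ∧
                st (p ++ [0]) = (if rest = [] then j + 1 else j)) ∨
            ((∀ a ψ, (σ j).2 ≠ PDLFormula.box (PDLProgram.atom a) ψ) ∧
              ∃ r, D.node p = some (Sum.inl r) ∧ schedRuleAnt (σ j).1 (σ j).2 S r ∧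
                (∀ i, st (p ++ [i]) = j + 1 ∧ pend (p ++ [i]) = [])))))) ∨
     ((∀ j, st p ≤ j → ¬ SchedApplies (σ j).1 (σ j).2 S) ∧
        D.node p = some (Sum.inr S))))

/-- `D` is a search tree for the sequent `S₀` with respect to the schedule `σ`: the limit of
the exhaustive proof-search construction in which, at each stage, closable open leaves are
closed by weakenings leading to (⊥) or an axiom, and the scheduled rule is applied at every
remaining open leaf in which the scheduled formula occurs. -/
def IsSearchTree (σ : ℕ → Label × PDLFormula) (S₀ : Sequent) (D : Deriv) : Prop :=
  D.seqAt [] = some S₀ ∧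
  ∃ (st : List ℕ → ℕ) (pend : List ℕ → List Label) (cl : List ℕ → Bool),
    st [] = 0 ∧ pend [] = [] ∧ cl [] = false ∧
    ∀ p S, D.seqAt p = some S → cl p = false →
      (closable S → ClosingSubtreeAt D p ∧ ∀ q, q ≠ ([] : List ℕ) → cl (p ++ q) = true) ∧
      (¬ closable S →
        (∀ i, cl (p ++ [i]) = false) ∧ SearchStepAt σ D st pend p S)

/-! ### Templates and the determined countermodel -/

/-- A template induced by a search tree `D`: the (possibly infinite) pair of sets of
antecedent/consequent elements of either an open node of `D`, or an untraceable branch of `D`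
(an infinite branch not followed by any infinitely progressing trace). -/
def Template (D : Deriv) (Γs Δs : Set SeqElem) : Prop :=
  (∃ p S, D.node p = some (Sum.inr S) ∧ Γs = ↑S.ant ∧ Δs = ↑S.suc) ∨
  (∃ f : ℕ → ℕ, IsInfPath D.ruleAt f ∧ ¬ FollowedByProgTrace D.ruleAt f ∧
     Γs = { A | ∃ n S, D.seqAt (pathAddr f n) = some S ∧ A ∈ S.ant } ∧
     Δs = { A | ∃ n S, D.seqAt (pathAddr f n) = some S ∧ A ∈ S.suc })

/-- The PDL model determined by a template: its states are the labels, an atomic proposition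
holds at `x` iff `x : p` is in the antecedent part, and `(x, y)` is an `a`-transition iff
`x →a y` is in the antecedent part. -/
def templateModel (Γs : Set SeqElem) : PDLModel where
  State := Label
  propI := fun q => { x | SeqElem.lab x (PDLFormula.atom q) ∈ Γs }
  progI := fun a => { w | SeqElem.rel w.1 a w.2 ∈ Γs }


open SeqElem PDLFormula PDLProgram

/-!
At an open leaf no scheduled rule applies any more. As every labelled non-atomic formula is
scheduled infinitely often, the leaf contains only relational atoms, propositional atoms and
boxes `x : [a]φ` without `a`-successors on the left, and only atoms absent from the left on the
right; such a sequent is refuted by its own model.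

Along an untraceable infinite branch the schedule is fair: every non-atomic formula on the
branch is eventually principal, so `(Γ*, Δ*)` is saturated under the rules. The truth lemma is
then proved by induction on formulas, together with two facts about programs `α`: `Γ*` is closed
under `[α]`-steps of `m_P`, and every `x : [α]φ ∈ Δ*` has an `α`-successor `z` with
`z : φ ∈ Δ*`. For `α = γ*` the latter needs untraceability: if the unfoldings of `x : [γ*]φ`
never reached such a `z`, they would form an infinitely progressing trace along the branch.
-/

lemma pathAddr_succ (f : ℕ → ℕ) (n : ℕ) : pathAddr f (n + 1) = pathAddr f n ++ [f n] := by
  simp [pathAddr, List.range_succ]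

lemma pathAddr_add (f : ℕ → ℕ) (n k : ℕ) :
    pathAddr f (n + k) = pathAddr f n ++ (List.range k).map (fun i => f (n + i)) := by
  induction k with
  | zero => simp
  | succ k ih => rw [← Nat.add_assoc, pathAddr_succ, ih, List.range_succ]; simp

lemma eq_pathAddr_of_prefix {f : ℕ → ℕ} {n : ℕ} {q : List ℕ} (h : q <+: pathAddr f n) :
    q = pathAddr f q.length := by
  have hlen : q.length ≤ n := by simpa [pathAddr] using h.length_le
  rw [List.prefix_iff_eq_take.mp h]
  simp [pathAddr, List.take_range, ← List.map_take, min_eq_left hlen]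

lemma List.getElem?_singleton_eq_some {α : Type*} {a b : α} {i : ℕ} (h : [a][i]? = some b) :
    i = 0 ∧ b = a := by
  rcases i with _ | i <;> simp_all

lemma List.getElem?_pair_eq_some {α : Type*} {a a' b : α} {i : ℕ} (h : [a, a'][i]? = some b) :
    (i = 0 ∧ b = a) ∨ (i = 1 ∧ b = a') := by
  rcases i with _ | _ | i <;> simp_all

lemma StrictMono.exists_le_lt_succ {ns : ℕ → ℕ} (hns : StrictMono ns) {t : ℕ} (ht : ns 0 ≤ t) :
    ∃ i, ns i ≤ t ∧ t < ns (i + 1) := by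
  classical
  have hex : ∃ i, t < ns (i + 1) := ⟨t, Nat.lt_of_lt_of_le (Nat.lt_succ_self t) hns.le_apply⟩
  refine ⟨Nat.find hex, ?_, Nat.find_spec hex⟩
  rcases h : Nat.find hex with _ | i
  · exact ht
  · exact not_lt.1 (Nat.find_min hex (h ▸ Nat.lt_succ_self i))

lemma StrictMono.eq_of_le_lt_succ {ns : ℕ → ℕ} (hns : StrictMono ns) {i j t : ℕ}
    (hi : ns i ≤ t ∧ t < ns (i + 1)) (hj : ns j ≤ t ∧ t < ns (j + 1)) : i = j := by
  by_contra hne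
  rcases Nat.lt_or_gt_of_ne hne with h | h
  · have := hns.monotone (show i + 1 ≤ j by omega); omega
  · have := hns.monotone (show j + 1 ≤ i by omega); omega

lemma exists_glue {β : Type*} {ns : ℕ → ℕ} (hns : StrictMono ns) (g : ℕ → ℕ → β)
    (hg : ∀ i, g i (ns (i + 1)) = g (i + 1) (ns (i + 1))) :
    ∃ G : ℕ → β, ∀ i t, ns i ≤ t → t ≤ ns (i + 1) → G t = g i t := by
  have hidx : ∀ t, ∃ i, ns 0 ≤ t → ns i ≤ t ∧ t < ns (i + 1) := fun t => by
    by_cases ht : ns 0 ≤ t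
    · exact (hns.exists_le_lt_succ ht).imp fun i hi _ => hi
    · exact ⟨0, fun h => absurd h ht⟩
  choose idx hidx using hidx
  refine ⟨fun t => g (idx t) t, fun i t h1 h2 => ?_⟩
  have h0 : ns 0 ≤ t := (hns.monotone (Nat.zero_le i)).trans h1
  show g (idx t) t = g i t
  rcases h2.lt_or_eq with h2 | rfl
  · rw [hns.eq_of_le_lt_succ (hidx t h0) ⟨h1, h2⟩]
  · rw [hns.eq_of_le_lt_succ (hidx _ h0) ⟨le_rfl, hns (Nat.lt_succ_self _)⟩, hg]

lemma PDLFormula.isNonAtomic_box (α : PDLProgram) (φ : PDLFormula) : (box α φ).isNonAtomic := by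
  simp [isNonAtomic, isAtomic]

namespace Deriv

lemma isSome_node_of_prefix (D : Deriv) {q p : List ℕ} (h : q <+: p)
    (hp : (D.node p).isSome) : (D.node q).isSome := by
  obtain ⟨rest, rfl⟩ := h
  induction rest using List.reverseRecOn with
  | nil => simpa using hp
  | append_singleton rest i ih =>
    refine ih ?_
    by_contra hnone
    rw [← List.append_assoc, D.tree_closed _ i (by simpa using hnone)] at hp
    simp at hp

lemma not_closingSubtreeAt_of_openLeaf (D : Deriv) {p q : List ℕ} {S : Sequent}
    (hleaf : D.node p = some (Sum.inr S)) (hq : q <+: p) : ¬ ClosingSubtreeAt D q := by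
  obtain ⟨rest, rfl⟩ := hq
  intro h
  simpa [openAt, hleaf] using h.2.1 rest

lemma not_closingSubtreeAt_of_infPath (D : Deriv) {f : ℕ → ℕ} (hf : IsInfPath D.ruleAt f)
    (n : ℕ) : ¬ ClosingSubtreeAt D (pathAddr f n) := by
  intro h
  refine Set.infinite_of_injective_forall_mem (f := fun k => (List.range k).map (f <| n + ·))
    (fun a b hab => by simpa using congrArg List.length hab) (fun k => ?_) h.2.2
  have := hf (n + k)
  rw [pathAddr_add, ruleAt] at this
  split at this <;> simp_all

end Deriv

lemma IsSearchTree.exists_stages {σ : ℕ → Label × PDLFormula} {S₀ : Sequent} {D : Deriv}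
    (hD : IsSearchTree σ S₀ D) :
    ∃ (st : List ℕ → ℕ) (pend : List ℕ → List Label), pend [] = [] ∧
      ∀ p, (D.node p).isSome → (∀ q, q <+: p → ¬ ClosingSubtreeAt D q) →
        ∃ S, D.seqAt p = some S ∧ ¬ closable S ∧ SearchStepAt σ D st pend p S := by
  obtain ⟨hroot, st, pend, cl, -, hpend, hcl, hstep⟩ := hD
  refine ⟨st, pend, hpend, fun p hp hnc => ?_⟩
  suffices ∃ S, D.seqAt p = some S ∧ cl p = false ∧ ¬ closable S by
    obtain ⟨S, hS, hclp, hncl⟩ := this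
    exact ⟨S, hS, hncl, ((hstep p S hS hclp).2 hncl).2⟩
  induction p using List.reverseRecOn with
  | nil => exact ⟨S₀, hroot, hcl, fun h => hnc [] List.prefix_rfl ((hstep [] S₀ hroot hcl).1 h).1⟩
  | append_singleton q i ih =>
    obtain ⟨Sq, hSq, hclq, hnclq⟩ :=
      ih (D.isSome_node_of_prefix (List.prefix_append q [i]) hp)
        (fun q' hq' => hnc q' (hq'.trans (List.prefix_append q [i])))
    have hcli := ((hstep q Sq hSq hclq).2 hnclq).1 i
    obtain ⟨S, hS⟩ : ∃ S, D.seqAt (q ++ [i]) = some S :=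
      Option.isSome_iff_exists.mp (by simpa [Deriv.seqAt] using hp)
    exact ⟨S, hS, hcli, fun h => hnc _ List.prefix_rfl ((hstep _ S hS hcli).1 h).1⟩

lemma schedApplies_of_mem_ant {x : Label} {φ : PDLFormula} {S : Sequent} (h : lab x φ ∈ S.ant)
    (hφ : ∀ a ψ, φ ≠ box (atom a) ψ) : SchedApplies x φ S := by
  refine Or.inr ⟨h, ?_⟩
  rcases φ with _ | _ | _ | _ | _ | ⟨_ | _ | _ | _ | _, ψ⟩ <;>
    first | trivial | exact (hφ _ ψ rfl).elim

def RuleApp.KeepsContext (r : RuleApp) (S : Sequent) : Prop :=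
  ∀ i P, r.prems[i]? = some P →
    S.ant ⊆ P.ant ∧ S.suc ⊆ P.suc ∧ ∀ τ : TraceValue, τ.toElem ∈ S.suc → r.tracePair i τ τ

lemma schedRuleSuc.keepsContext {x : Label} {φ : PDLFormula} {S : Sequent} {r : RuleApp}
    (h : schedRuleSuc x φ S r) : r.KeepsContext S := by
  intro i P hP
  have hi := (List.getElem?_eq_some_iff.1 hP).1
  have hmem := List.mem_of_getElem? hP
  rcases φ with _ | _ | ⟨φ, ψ⟩ | ⟨φ, ψ⟩ | ⟨φ, ψ⟩ | ⟨_ | ⟨α, β⟩ | ⟨α, β⟩ | χ | α, ψ⟩ <;>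
    simp only [schedRuleSuc] at h <;> (first | subst h | obtain ⟨y, rfl⟩ := h) <;>
    simp only [RuleApp.prems, List.length, List.mem_cons, List.not_mem_nil, or_false] at hi hmem <;>
    rcases hmem with rfl | rfl <;>
    exact ⟨fun e he => by simp [he], fun e he => by simp [he],
      fun τ hτ => by simp [RuleApp.tracePair, hτ]; omega⟩

lemma schedRuleAnt.keepsContext {x : Label} {φ : PDLFormula} {S : Sequent} {r : RuleApp}
    (h : schedRuleAnt x φ S r) : r.KeepsContext S := by
  intro i P hP
  have hi := (List.getElem?_eq_some_iff.1 hP).1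
  have hmem := List.mem_of_getElem? hP
  rcases φ with _ | _ | ⟨φ, ψ⟩ | ⟨φ, ψ⟩ | ⟨φ, ψ⟩ | ⟨_ | ⟨α, β⟩ | ⟨α, β⟩ | χ | α, ψ⟩ <;>
    simp only [schedRuleAnt] at h <;> subst h <;>
    simp only [RuleApp.prems, List.length, List.mem_cons, List.not_mem_nil, or_false] at hi hmem <;>
    rcases hmem with rfl | rfl <;>
    exact ⟨fun e he => by simp [he], fun e he => by simp [he],
      fun τ hτ => by simp [RuleApp.tracePair, hτ]; omega⟩

lemma RuleApp.keepsContext_boxL (x : Label) (a : ℕ) (y : Label) (ψ : PDLFormula) (S : Sequent) :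
    (boxL x a y ψ S.ant S.suc).KeepsContext S := by
  intro i P hP
  simp [prems, List.getElem?_cons] at hP
  obtain ⟨rfl, rfl⟩ := hP
  exact ⟨fun e he => by simp [he], fun e he => he, fun τ hτ => by simp [tracePair, hτ]⟩

def SchedStep (σ : ℕ → Label × PDLFormula) (S : ℕ → Sequent) (r : ℕ → RuleApp)
    (pend : ℕ → List Label) (n j : ℕ) : Prop :=
  (lab (σ j).1 (σ j).2 ∈ (S n).suc ∧ schedRuleSuc (σ j).1 (σ j).2 (S n) (r n)) ∨
  (lab (σ j).1 (σ j).2 ∈ (S n).ant ∧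
    ((∃ a ψ y, (σ j).2 = box (atom a) ψ ∧
        (∀ z, z ∈ y :: pend (n + 1) ↔ rel (σ j).1 a z ∈ (S n).ant) ∧
        r n = RuleApp.boxL (σ j).1 a y ψ (S n).ant (S n).suc) ∨
     ((∀ a ψ, (σ j).2 ≠ box (atom a) ψ) ∧ schedRuleAnt (σ j).1 (σ j).2 (S n) (r n))))

/-- `SearchStepAt` along a branch. Step `n` either continues the pending (□L)-chain of entry
`j = st n` or, with nothing pending, performs the `SchedStep` of the first entry `j ≥ st n` that
applies; the stage moves on to `j + 1` exactly when no (□L)-step is left pending. -/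
def BranchStep (σ : ℕ → Label × PDLFormula) (S : ℕ → Sequent) (r : ℕ → RuleApp)
    (st : ℕ → ℕ) (pend : ℕ → List Label) (n : ℕ) : Prop :=
  ∃ j, st (n + 1) = (if pend (n + 1) = [] then j + 1 else j) ∧
    ((∃ x a ψ y, pend n = y :: pend (n + 1) ∧ j = st n ∧ σ j = (x, box (atom a) ψ) ∧
        r n = RuleApp.boxL x a y ψ (S n).ant (S n).suc) ∨
     (pend n = [] ∧ st n ≤ j ∧
        (∀ j', st n ≤ j' → j' < j → ¬ SchedApplies (σ j').1 (σ j').2 (S n)) ∧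
        SchedStep σ S r pend n j))

lemma branchStep_of_searchStepAt {σ : ℕ → Label × PDLFormula} {D : Deriv} {f : ℕ → ℕ}
    {r : ℕ → RuleApp} {st : List ℕ → ℕ} {pend : List ℕ → List Label}
    (hr : ∀ n, D.node (pathAddr f n) = some (Sum.inl (r n)))
    (hprem : ∀ n, (r n).prems[f n]? = some (r (n + 1)).conc)
    (hstep : ∀ n, SearchStepAt σ D st pend (pathAddr f n) (r n).conc) (n : ℕ) :
    BranchStep σ (fun n => (r n).conc) r (st ∘ pathAddr f) (pend ∘ pathAddr f) n := by
  have hrule : ∀ r', D.node (pathAddr f n) = some (Sum.inl r') → r n = r' := fun r' h => by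
    simpa [hr n] using h
  have hboxL : ∀ x a y ψ Γ Δ, r n = RuleApp.boxL x a y ψ Γ Δ →
      pathAddr f n ++ [0] = pathAddr f (n + 1) := fun x a y ψ Γ Δ h => by
    have := hprem n
    simp [h, RuleApp.prems, List.getElem?_cons] at this
    rw [pathAddr_succ, this.1]
  have hsucc : pathAddr f n ++ [f n] = pathAddr f (n + 1) := (pathAddr_succ f n).symm
  rcases hstep n with ⟨x, a, ψ, y, rest, hpend, hσ, -, -, hnode, hpd, hst⟩ | ⟨hpend, hsched⟩
  · have hrn := hrule _ hnode
    rw [hboxL _ _ _ _ _ _ hrn] at hpd hst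
    refine ⟨_, by simp [hst, hpd], Or.inl ⟨x, a, ψ, y, ?_, rfl, hσ, hrn⟩⟩
    simp [hpend, hpd]
  obtain ⟨j, hj, -, hleast, hbr⟩ := hsched.resolve_right fun ⟨_, hleaf⟩ => by simp [hr n] at hleaf
  refine ⟨j, ?_⟩
  rcases hbr with ⟨hin, r', hnode, hsr, hupd⟩ |
    ⟨-, hin, ⟨a, ψ, hφ, y, rest, -, hiff, hnode, hpd, hst⟩ | ⟨hnb, r', hnode, hsr, hupd⟩⟩
  · obtain ⟨hst, hpd⟩ := hupd (f n)
    rw [hsucc] at hst hpd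
    exact ⟨by simp [hst, hpd], Or.inr ⟨hpend, hj, hleast, Or.inl ⟨hin, hrule _ hnode ▸ hsr⟩⟩⟩
  · have hrn := hrule _ hnode
    rw [hboxL _ _ _ _ _ _ hrn] at hpd hst
    refine ⟨by simp [hst, hpd],
      Or.inr ⟨hpend, hj, hleast, Or.inr ⟨hin, Or.inl ⟨a, ψ, y, hφ, ?_, hrn⟩⟩⟩⟩
    simpa [hpd] using hiff
  · obtain ⟨hst, hpd⟩ := hupd (f n)
    rw [hsucc] at hst hpd
    exact ⟨by simp [hst, hpd],
      Or.inr ⟨hpend, hj, hleast, Or.inr ⟨hin, Or.inr ⟨hnb, hrule _ hnode ▸ hsr⟩⟩⟩⟩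

structure SearchBranch where
  σ : ℕ → Label × PDLFormula
  R : List ℕ → Option RuleApp
  f : ℕ → ℕ
  S : ℕ → Sequent
  r : ℕ → RuleApp
  st : ℕ → ℕ
  pend : ℕ → List Label
  isSchedule : IsSchedule σ
  rule_path : ∀ n, R (pathAddr f n) = some (r n)
  prem_path : ∀ n, (r n).prems[f n]? = some (S (n + 1))
  not_closable : ∀ n, ¬ closable (S n)
  pend_zero : pend 0 = []
  step : ∀ n, BranchStep σ S r st pend n
  untraceable : ¬ FollowedByProgTrace R f

lemma IsSearchTree.exists_branch {σ : ℕ → Label × PDLFormula} {S₀ : Sequent} {D : Deriv}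
    (hσ : IsSchedule σ) (hD : IsSearchTree σ S₀ D) {f : ℕ → ℕ} (hf : IsInfPath D.ruleAt f)
    (huntraced : ¬ FollowedByProgTrace D.ruleAt f) :
    ∃ B : SearchBranch, ∀ n, D.seqAt (pathAddr f n) = some (B.S n) := by
  obtain ⟨st, pend, hpend, hsteps⟩ := hD.exists_stages
  have hnode : ∀ n, ∃ r, D.node (pathAddr f n) = some (Sum.inl r) := fun n => by
    have := hf n
    rw [Deriv.ruleAt] at this
    split at this <;> simp_all
  choose r hr using hnode
  have hseq : ∀ n, D.seqAt (pathAddr f n) = some (r n).conc := fun n => by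
    simp [Deriv.seqAt, hr n, DNode.concl]
  have hsearch : ∀ n, ¬ closable (r n).conc ∧ SearchStepAt σ D st pend (pathAddr f n) (r n).conc :=
    fun n => by
      obtain ⟨S, hS, hncl, hstep⟩ := hsteps (pathAddr f n) (by simp [hr n]) fun q hq => by
        rw [eq_pathAddr_of_prefix hq]
        exact D.not_closingSubtreeAt_of_infPath hf _
      rw [hseq n, Option.some_inj] at hS
      exact hS ▸ ⟨hncl, hstep⟩
  have hprem : ∀ n, (r n).prems[f n]? = some (r (n + 1)).conc := fun n => by
    have := D.children _ _ (hr n) (f n)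
    rw [← pathAddr_succ, hr (n + 1)] at this
    exact this.symm
  refine ⟨⟨σ, D.ruleAt, f, fun n => (r n).conc, r, st ∘ pathAddr f, pend ∘ pathAddr f, hσ,
    fun n => by simp [Deriv.ruleAt, hr n], hprem, fun n => (hsearch n).1, by simpa [pathAddr],
    branchStep_of_searchStepAt hr hprem fun n => (hsearch n).2, huntraced⟩, hseq⟩

namespace SearchBranch

variable (B : SearchBranch)

def ant : Set SeqElem := {A | ∃ n, A ∈ (B.S n).ant}

def suc : Set SeqElem := {A | ∃ n, A ∈ (B.S n).suc}

lemma prem_mem (n : ℕ) : B.S (n + 1) ∈ (B.r n).prems := List.mem_of_getElem? (B.prem_path n)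

lemma mem_of_prem_eq {m : ℕ} {Γ Δ : Finset SeqElem} (h : B.S (m + 1) = ⟨Γ, Δ⟩) :
    (∀ A ∈ Γ, A ∈ B.ant) ∧ (∀ A ∈ Δ, A ∈ B.suc) :=
  ⟨fun A hA => ⟨m + 1, by simp [h, hA]⟩, fun A hA => ⟨m + 1, by simp [h, hA]⟩⟩

lemma keepsContext (n : ℕ) : (B.r n).KeepsContext (B.S n) := by
  obtain ⟨j, -, ⟨x, a, ψ, y, -, -, -, hr⟩ | ⟨-, -, -, hsuc | ⟨-, ⟨a, ψ, y, -, -, hr⟩ | hant⟩⟩⟩ :=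
    B.step n
  · exact hr ▸ RuleApp.keepsContext_boxL x a y ψ _
  · exact hsuc.2.keepsContext
  · exact hr ▸ RuleApp.keepsContext_boxL _ a y ψ _
  · exact hant.2.keepsContext

lemma ant_mono : Monotone fun n => (B.S n).ant :=
  monotone_nat_of_le_succ fun n => (B.keepsContext n _ _ (B.prem_path n)).1

lemma suc_mono : Monotone fun n => (B.S n).suc :=
  monotone_nat_of_le_succ fun n => (B.keepsContext n _ _ (B.prem_path n)).2.1

lemma tracePair_self {n : ℕ} {τ : TraceValue} (hτ : τ.toElem ∈ (B.S n).suc) :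
    (B.r n).tracePair (B.f n) τ τ :=
  (B.keepsContext n _ _ (B.prem_path n)).2.2 τ hτ

lemma not_mem_suc_of_mem_ant {A : SeqElem} (hant : A ∈ B.ant) (hsuc : A ∈ B.suc) : False := by
  obtain ⟨n, hn⟩ := hant
  obtain ⟨m, hm⟩ := hsuc
  exact B.not_closable (max n m)
    (Or.inr ⟨A, B.ant_mono (le_max_left n m) hn, B.suc_mono (le_max_right n m) hm⟩)

lemma bot_not_mem_ant (x : Label) : lab x bot ∉ B.ant :=
  fun ⟨n, hn⟩ => B.not_closable n (Or.inl ⟨x, hn⟩)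

lemma st_le_succ (n : ℕ) : B.st n ≤ B.st (n + 1) := by
  obtain ⟨j, hst, ⟨-, -, -, -, -, rfl, -⟩ | ⟨-, hj, -⟩⟩ := B.step n <;> split_ifs at hst <;> omega

lemma st_mono : Monotone B.st := monotone_nat_of_le_succ B.st_le_succ

lemma chainStep {n : ℕ} {y : Label} {ys : List Label} (h : B.pend n = y :: ys) :
    ∃ x a ψ, B.pend (n + 1) = ys ∧ B.st (n + 1) = (if ys = [] then B.st n + 1 else B.st n) ∧
      B.σ (B.st n) = (x, box (atom a) ψ) ∧
      B.r n = RuleApp.boxL x a y ψ (B.S n).ant (B.S n).suc := by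
  obtain ⟨j, hst, ⟨x, a, ψ, y', hpend, rfl, hσ, hr⟩ | ⟨hpend, -⟩⟩ := B.step n
  · rw [h, List.cons.injEq] at hpend
    obtain ⟨rfl, hys⟩ := hpend
    exact ⟨x, a, ψ, hys.symm, hys ▸ hst, hσ, hr⟩
  · simp [h] at hpend

lemma exists_st_eq_succ_of_pend_ne_nil :
    ∀ (ys : List Label) (n : ℕ), B.pend n = ys → ys ≠ [] → ∃ m, B.st m = B.st n + 1
  | [], _, _, hne => absurd rfl hne
  | y :: ys, n, hpend, _ => by
    obtain ⟨-, -, -, hys, hst, -⟩ := B.chainStep hpend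
    by_cases hnil : ys = []
    · exact ⟨n + 1, by simp [hst, hnil]⟩
    · obtain ⟨m, hm⟩ := exists_st_eq_succ_of_pend_ne_nil ys (n + 1) hys hnil
      exact ⟨m, by simp [hm, hst, hnil]⟩

lemma exists_st_lt (n : ℕ) : ∃ m, B.st n < B.st m := by
  obtain ⟨j, hst, hj⟩ : ∃ j, B.st (n + 1) = (if B.pend (n + 1) = [] then j + 1 else j) ∧
      B.st n ≤ j := by
    obtain ⟨j, hst, ⟨-, -, -, -, -, rfl, -⟩ | ⟨-, hj, -⟩⟩ := B.step n
    exacts [⟨_, hst, le_rfl⟩, ⟨j, hst, hj⟩]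
  by_cases hnil : B.pend (n + 1) = []
  · exact ⟨n + 1, by simpa [hst, hnil, Nat.lt_succ_iff] using hj⟩
  · obtain ⟨m, hm⟩ := B.exists_st_eq_succ_of_pend_ne_nil _ (n + 1) rfl hnil
    exact ⟨m, by simp [hm, hst, hnil]; omega⟩

lemma exists_lt_st (c : ℕ) : ∃ m, c < B.st m := by
  induction c with
  | zero => exact (B.exists_st_lt 0).imp fun _ h => by omega
  | succ c ih =>
    obtain ⟨m, hm⟩ := ih
    exact (B.exists_st_lt m).imp fun _ h => by omega

lemma exists_chain_start : ∀ m, B.pend m ≠ [] → ∃ k < m,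
    SchedStep B.σ B.S B.r B.pend k (B.st m) ∧ ∀ i, k < i → i ≤ m → B.st i = B.st m
  | 0, h => absurd B.pend_zero h
  | m + 1, h => by
    obtain ⟨j, hst, ⟨_, _, _, _, hpend, rfl, -, -⟩ | ⟨-, -, -, hsched⟩⟩ := B.step m <;>
      rw [if_neg h] at hst
    · obtain ⟨k, hk, hsched, hconst⟩ := exists_chain_start m (by simp [hpend])
      refine ⟨k, by omega, by rwa [hst], fun i h1 h2 => ?_⟩
      rcases h2.lt_or_eq with h2 | rfl
      · rw [hconst i h1 (by omega), hst]
      · rfl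
    · exact ⟨m, by omega, by rwa [hst], fun i h1 h2 => by rw [show i = m + 1 by omega]⟩

lemma exists_schedStep {n j₀ : ℕ} (hj₀ : B.st n < j₀)
    (happ : ∀ m, n ≤ m → SchedApplies (B.σ j₀).1 (B.σ j₀).2 (B.S m)) :
    ∃ m, n ≤ m ∧ SchedStep B.σ B.S B.r B.pend m j₀ ∧ (B.pend (m + 1) ≠ [] → B.st (m + 1) = j₀) := by
  classical
  obtain ⟨M, hM⟩ := B.exists_lt_st j₀
  have hex : ∃ m, j₀ < B.st (m + 1) := ⟨M, hM.trans_le (B.st_mono (by omega))⟩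
  obtain ⟨m, hm, hmin⟩ : ∃ m, j₀ < B.st (m + 1) ∧ ∀ k < m, B.st (k + 1) ≤ j₀ :=
    ⟨Nat.find hex, Nat.find_spec hex, fun k hk => not_lt.1 (Nat.find_min hex hk)⟩
  have hnm : n ≤ m := by
    by_contra h
    have := B.st_mono (show m + 1 ≤ n by omega)
    omega
  have hstm : B.st m ≤ j₀ := by
    rcases m with _ | k
    · exact (B.st_mono (Nat.zero_le n)).trans hj₀.le
    · exact hmin k (by omega)
  obtain ⟨j, hst, ⟨_, _, _, _, hpend, rfl, -, -⟩ | ⟨-, -, hleast, hsched⟩⟩ := B.step m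
  · -- a (□L)-chain finishing at `m` was started on `j₀` after step `n`
    have hj : B.st m = j₀ := by split_ifs at hst <;> omega
    obtain ⟨k, hkm, hsched, hconst⟩ := B.exists_chain_start m (by simp [hpend])
    have hnk : n ≤ k := by
      by_contra h
      have := hconst n (by omega) hnm
      omega
    exact ⟨k, hnk, hj ▸ hsched, fun _ => hj ▸ hconst (k + 1) (by omega) (by omega)⟩
  · have hj : j ≤ j₀ := by
      by_contra h
      exact hleast j₀ hstm (by omega) (happ m hnm)
    have hj : j = j₀ := by split_ifs at hst <;> omega
    exact ⟨m, hnm, hj ▸ hsched, fun hne => by rw [hst, if_neg hne, hj]⟩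

lemma exists_schedStep_of_applies {x : Label} {φ : PDLFormula} (hφ : φ.isNonAtomic) {n : ℕ}
    (happ : ∀ m, n ≤ m → SchedApplies x φ (B.S m)) :
    ∃ m, n ≤ m ∧ ∃ j, B.σ j = (x, φ) ∧ SchedStep B.σ B.S B.r B.pend m j ∧
      (B.pend (m + 1) ≠ [] → B.st (m + 1) = j) := by
  obtain ⟨j, hj, hσj⟩ := B.isSchedule.2 x φ hφ (B.st n + 1)
  obtain ⟨m, hm, hstep⟩ := B.exists_schedStep (n := n) (j₀ := j) (by omega)
    (by simpa [hσj] using happ)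
  exact ⟨m, hm, j, hσj, hstep⟩

lemma exists_schedRuleSuc {x : Label} {φ : PDLFormula} (hφ : φ.isNonAtomic) {n : ℕ}
    (h : lab x φ ∈ (B.S n).suc) : ∃ m, n ≤ m ∧ schedRuleSuc x φ (B.S m) (B.r m) := by
  obtain ⟨m, hm, j, hσj, hstep, -⟩ :=
    B.exists_schedStep_of_applies hφ fun m hm => Or.inl (B.suc_mono hm h)
  simp only [SchedStep, hσj] at hstep
  rcases hstep with ⟨-, hr⟩ | ⟨hant, -⟩
  · exact ⟨m, hm, hr⟩
  · exact (B.not_closable m (Or.inr ⟨_, hant, B.suc_mono hm h⟩)).elim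

lemma exists_schedRuleAnt {x : Label} {φ : PDLFormula} (hφ : φ.isNonAtomic)
    (hbox : ∀ a ψ, φ ≠ box (atom a) ψ) {n : ℕ} (h : lab x φ ∈ (B.S n).ant) :
    ∃ m, schedRuleAnt x φ (B.S m) (B.r m) := by
  obtain ⟨m, hm, j, hσj, hstep, -⟩ := B.exists_schedStep_of_applies hφ fun m hm =>
    schedApplies_of_mem_ant (B.ant_mono hm h) hbox
  simp only [SchedStep, hσj] at hstep
  rcases hstep with ⟨hsuc, -⟩ | ⟨-, ⟨a, ψ, y, rfl, -⟩ | ⟨-, hr⟩⟩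
  · exact (B.not_closable m (Or.inr ⟨_, B.ant_mono hm h, hsuc⟩)).elim
  · exact (hbox a ψ rfl).elim
  · exact ⟨m, hr⟩

lemma mem_ant_of_boxL_chain {x : Label} {a : ℕ} {ψ : PDLFormula} :
    ∀ (ys : List Label) {n : ℕ} {y : Label},
      B.r n = RuleApp.boxL x a y ψ (B.S n).ant (B.S n).suc → B.pend (n + 1) = ys →
      (ys ≠ [] → B.σ (B.st (n + 1)) = (x, box (atom a) ψ)) →
      ∀ z ∈ y :: ys, lab z ψ ∈ B.ant
  | ys, n, y, hr, hpend, hσ, z, hz => by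
    rcases List.mem_cons.1 hz with rfl | hz
    · have := B.prem_mem n
      simp only [hr, RuleApp.prems, List.mem_singleton] at this
      exact (B.mem_of_prem_eq this).1 _ (Finset.mem_insert_self _ _)
    rcases ys with _ | ⟨y', ys'⟩
    · exact absurd hz List.not_mem_nil
    obtain ⟨x', a', ψ', hys, hst, hσ', hr'⟩ := B.chainStep hpend
    rw [hσ (List.cons_ne_nil _ _), Prod.mk.injEq, box.injEq, PDLProgram.atom.injEq] at hσ'
    obtain ⟨rfl, rfl, rfl⟩ := hσ'
    exact mem_ant_of_boxL_chain ys' hr' hys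
      (fun hne => by rw [hst, if_neg hne]; exact hσ (List.cons_ne_nil _ _)) z hz

lemma mem_ant_of_box_atom {x y : Label} {a : ℕ} {ψ : PDLFormula}
    (hbox : lab x (box (atom a) ψ) ∈ B.ant) (hrel : rel x a y ∈ B.ant) : lab y ψ ∈ B.ant := by
  obtain ⟨n₁, hn₁⟩ := hbox
  obtain ⟨n₂, hn₂⟩ := hrel
  have hbox := B.ant_mono (le_max_left n₁ n₂) hn₁
  have hrel := B.ant_mono (le_max_right n₁ n₂) hn₂
  obtain ⟨m, hm, j, hσj, hstep, hst⟩ := B.exists_schedStep_of_applies (isNonAtomic_box _ _)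
    fun m hm => Or.inr ⟨B.ant_mono hm hbox, y, B.ant_mono hm hrel⟩
  simp only [SchedStep, hσj] at hstep
  rcases hstep with ⟨hsuc, -⟩ | ⟨-, ⟨a', ψ', y', hφ, hiff, hr⟩ | ⟨hnb, -⟩⟩
  · exact (B.not_closable m (Or.inr ⟨_, B.ant_mono hm hbox, hsuc⟩)).elim
  · simp only [box.injEq, PDLProgram.atom.injEq] at hφ
    obtain ⟨rfl, rfl⟩ := hφ
    exact B.mem_ant_of_boxL_chain _ hr rfl (fun hne => by rw [hst hne, hσj]) y
      ((hiff y).2 (B.ant_mono hm hrel))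
  · exact (hnb a ψ rfl).elim

end SearchBranch

/-- The formulas that the left rule for `x : φ` adds to (one of) its premises lie in `(Γ, Δ)`. -/
def HintikkaAnt (Γ Δ : Set SeqElem) (x : Label) : PDLFormula → Prop
  | .and φ ψ => lab x φ ∈ Γ ∧ lab x ψ ∈ Γ
  | .or φ ψ => lab x φ ∈ Γ ∨ lab x ψ ∈ Γ
  | .imp φ ψ => lab x φ ∈ Δ ∨ lab x ψ ∈ Γ
  | .box (.comp α β) ψ => lab x (box α (box β ψ)) ∈ Γ
  | .box (.choice α β) ψ => lab x (box α ψ) ∈ Γ ∧ lab x (box β ψ) ∈ Γ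
  | .box (.test χ) ψ => lab x χ ∈ Δ ∨ lab x ψ ∈ Γ
  | .box (.star α) ψ => lab x ψ ∈ Γ ∧ lab x (box α (box (star α) ψ)) ∈ Γ
  | _ => True

def HintikkaSuc (Γ Δ : Set SeqElem) (x : Label) : PDLFormula → Prop
  | .and φ ψ => lab x φ ∈ Δ ∨ lab x ψ ∈ Δ
  | .or φ ψ => lab x φ ∈ Δ ∧ lab x ψ ∈ Δ
  | .imp φ ψ => lab x φ ∈ Γ ∧ lab x ψ ∈ Δ
  | _ => True

namespace SearchBranch

variable (B : SearchBranch)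

lemma hintikkaAnt {x : Label} {φ : PDLFormula} (h : lab x φ ∈ B.ant) :
    HintikkaAnt B.ant B.suc x φ := by
  obtain ⟨n, hn⟩ := h
  rcases φ with _ | _ | ⟨φ, ψ⟩ | ⟨φ, ψ⟩ | ⟨φ, ψ⟩ | ⟨_ | ⟨α, β⟩ | ⟨α, β⟩ | χ | α, ψ⟩ <;>
    try trivial
  all_goals
    obtain ⟨m, hr⟩ := B.exists_schedRuleAnt (by simp [isNonAtomic, isAtomic]) (by simp) hn
    have hP := B.prem_mem m
    simp only [schedRuleAnt] at hr
    simp only [hr, RuleApp.prems, List.mem_cons, List.not_mem_nil, or_false] at hP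
    simp only [HintikkaAnt]
    try rcases hP with hP | hP
    all_goals
      have := B.mem_of_prem_eq hP
      simp only [Finset.mem_insert, forall_eq_or_imp] at this
      tauto

lemma hintikkaSuc {x : Label} {φ : PDLFormula} (h : lab x φ ∈ B.suc) :
    HintikkaSuc B.ant B.suc x φ := by
  obtain ⟨n, hn⟩ := h
  rcases φ with _ | _ | ⟨φ, ψ⟩ | ⟨φ, ψ⟩ | ⟨φ, ψ⟩ | _ <;> try trivial
  all_goals
    obtain ⟨m, -, hr⟩ := B.exists_schedRuleSuc (by simp [isNonAtomic, isAtomic]) hn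
    have hP := B.prem_mem m
    simp only [schedRuleSuc] at hr
    simp only [hr, RuleApp.prems, List.mem_cons, List.not_mem_nil, or_false] at hP
    simp only [HintikkaSuc]
    try rcases hP with hP | hP
    all_goals
      have := B.mem_of_prem_eq hP
      simp only [Finset.mem_insert, forall_eq_or_imp] at this
      tauto

def TraceSeg (n m : ℕ) (τ ρ : TraceValue) (prog : Bool) : Prop :=
  n ≤ m ∧ ∃ g : ℕ → TraceValue, g n = τ ∧ g m = ρ ∧
    (∀ k, n ≤ k → k < m → (B.r k).tracePair (B.f k) (g k) (g (k + 1))) ∧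
    (prog → ∃ k, n ≤ k ∧ k < m ∧ (B.r k).progressing (B.f k) (g k) (g (k + 1)))

variable {B}

lemma TraceSeg.refl (n : ℕ) (τ : TraceValue) : B.TraceSeg n n τ τ false :=
  ⟨le_rfl, fun _ => τ, rfl, rfl, fun _ h1 h2 => absurd h2 (not_lt.2 h1), nofun⟩

lemma TraceSeg.single {n : ℕ} {τ ρ : TraceValue} (h : (B.r n).tracePair (B.f n) τ ρ) :
    B.TraceSeg n (n + 1) τ ρ false := by
  refine ⟨by omega, fun k => if k = n then τ else ρ, by simp, by simp, fun k h1 h2 => ?_, nofun⟩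
  obtain rfl : k = n := by omega
  simpa using h

lemma TraceSeg.single_progressing {n : ℕ} {τ ρ : TraceValue}
    (h : (B.r n).tracePair (B.f n) τ ρ) (hprog : (B.r n).progressing (B.f n) τ ρ) :
    B.TraceSeg n (n + 1) τ ρ true := by
  refine ⟨by omega, fun k => if k = n then τ else ρ, by simp, by simp, fun k h1 h2 => ?_,
    fun _ => ⟨n, le_rfl, by omega, by simpa using hprog⟩⟩
  obtain rfl : k = n := by omega
  simpa using h

lemma TraceSeg.trans {n m l : ℕ} {τ ρ χ : TraceValue} {p q : Bool}
    (h₁ : B.TraceSeg n m τ ρ p) (h₂ : B.TraceSeg m l ρ χ q) : B.TraceSeg n l τ χ (p || q) := by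
  obtain ⟨hnm, g₁, h₁n, h₁m, htr₁, hpr₁⟩ := h₁
  obtain ⟨hml, g₂, h₂m, h₂l, htr₂, hpr₂⟩ := h₂
  set G := fun k => if k < m then g₁ k else g₂ k
  have hG₁ : ∀ k ≤ m, G k = g₁ k := fun k hk => by
    rcases hk.lt_or_eq with hk | rfl
    · simp [G, hk]
    · simp [G, h₁m, h₂m]
  have hG₂ : ∀ k, m ≤ k → G k = g₂ k := fun k hk => by simp [G, not_lt.2 hk]
  refine ⟨hnm.trans hml, G, by rw [hG₁ n hnm, h₁n], by rw [hG₂ l hml, h₂l], fun k h1 h2 => ?_,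
    fun hpq => ?_⟩
  · rcases lt_or_ge k m with hk | hk
    · rw [hG₁ k hk.le, hG₁ (k + 1) hk]; exact htr₁ k h1 hk
    · rw [hG₂ k hk, hG₂ (k + 1) (by omega)]; exact htr₂ k hk h2
  · rcases Bool.or_eq_true_iff.1 hpq with hp | hq
    · obtain ⟨k, h1, h2, hk⟩ := hpr₁ hp
      exact ⟨k, h1, by omega, by rwa [hG₁ k h2.le, hG₁ (k + 1) h2]⟩
    · obtain ⟨k, h1, h2, hk⟩ := hpr₂ hq
      exact ⟨k, by omega, h2, by rwa [hG₂ k h1, hG₂ (k + 1) (by omega)]⟩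

variable (B)

lemma traceSeg_self {n m : ℕ} {τ : TraceValue} (hτ : τ.toElem ∈ (B.S n).suc) (hnm : n ≤ m) :
    B.TraceSeg n m τ τ false :=
  ⟨hnm, fun _ => τ, rfl, rfl, fun _ hk _ => B.tracePair_self (B.suc_mono hk hτ), nofun⟩

lemma traceSeg_box_self {n m : ℕ} {u : Label} {α : PDLProgram} {sp : List PDLProgram}
    {δ : PDLProgram} {χ : PDLFormula}
    (h : lab u (box α (sp.foldr box (box (star δ) χ))) ∈ (B.S n).suc) (hnm : n ≤ m) :
    B.TraceSeg n m ⟨u, α :: sp, δ, χ⟩ ⟨u, α :: sp, δ, χ⟩ false :=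
  B.traceSeg_self h hnm

lemma not_forall_traceSeg (ns : ℕ → ℕ) (τs : ℕ → TraceValue)
    (h : ∀ i, B.TraceSeg (ns i) (ns (i + 1)) (τs i) (τs (i + 1)) true) : False := by
  have hns : StrictMono ns := strictMono_nat_of_lt_succ fun i => by
    obtain ⟨-, _, -, -, -, hprog⟩ := h i
    obtain ⟨k, h1, h2, -⟩ := hprog rfl
    omega
  choose _ g hg₀ hg₁ htr hprog using h
  obtain ⟨G, hG⟩ := exists_glue hns g fun i => (hg₁ i).trans (hg₀ (i + 1)).symm
  have hns_add : ∀ i, ns 0 + i ≤ ns i := fun i => by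
    induction i with
    | zero => rfl
    | succ i ih => have := hns (show i < i + 1 by omega); omega
  refine B.untraceable ⟨ns 0, fun k => G (ns 0 + k), fun k => ⟨_, B.rule_path _, ?_⟩, fun k => ?_⟩
  · obtain ⟨i, h1, h2⟩ := hns.exists_le_lt_succ (Nat.le_add_right (ns 0) k)
    show (B.r _).tracePair _ (G (ns 0 + k)) (G (ns 0 + (k + 1)))
    rw [← Nat.add_assoc, hG i _ h1 h2.le, hG i _ (by omega) h2]
    exact htr i _ h1 h2
  · obtain ⟨t, h1, h2, hp⟩ := hprog k rfl
    have := hns_add k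
    refine ⟨t - ns 0, by omega, _, B.rule_path _, ?_⟩
    show (B.r _).progressing _ (G (ns 0 + (t - ns 0))) (G (ns 0 + (t - ns 0 + 1)))
    rw [Nat.add_sub_cancel' (by omega), ← Nat.add_assoc, Nat.add_sub_cancel' (by omega),
      hG k _ h1 h2.le, hG k _ (by omega) h2]
    exact hp

/-- The last clause traces `u : [α]θ` to `z : θ` for every way of writing `θ` as `[sp][δ*]χ`,
the formula of a trace value. -/
def Fulfils (α : PDLProgram) : Prop :=
  ∀ (θ : PDLFormula) (u : Label) (n : ℕ), lab u (box α θ) ∈ (B.S n).suc →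
    ∃ m z, n ≤ m ∧ (u, z) ∈ α.sem (templateModel B.ant) ∧ lab z θ ∈ (B.S m).suc ∧
      ∀ sp δ χ, sp.foldr box (box (star δ) χ) = θ →
        B.TraceSeg n m ⟨u, α :: sp, δ, χ⟩ ⟨z, sp, δ, χ⟩ false

lemma fulfils_atom (a : ℕ) : B.Fulfils (atom a) := by
  intro θ u n h
  obtain ⟨m, hnm, y, hr⟩ := B.exists_schedRuleSuc (isNonAtomic_box _ _) h
  have hprem := B.prem_path m
  rw [hr] at hprem
  obtain ⟨hf, hS⟩ := List.getElem?_singleton_eq_some hprem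
  refine ⟨m + 1, y, by omega, ⟨m + 1, by simp [hS]⟩, by simp [hS], fun sp δ χ hθ => ?_⟩
  subst hθ
  refine (B.traceSeg_box_self h hnm).trans (TraceSeg.single ?_)
  rw [hr, hf]
  simp [RuleApp.tracePair, TraceValue.toElem, TraceValue.toFormula]

variable {B}

lemma fulfils_comp {α β : PDLProgram} (hα : B.Fulfils α) (hβ : B.Fulfils β) :
    B.Fulfils (comp α β) := by
  intro θ u n h
  obtain ⟨m, hnm, hr⟩ := B.exists_schedRuleSuc (isNonAtomic_box _ _) h
  have hprem := B.prem_path m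
  rw [hr] at hprem
  obtain ⟨hf, hS⟩ := List.getElem?_singleton_eq_some hprem
  obtain ⟨m₁, z₁, hm₁, hz₁, hmem₁, hseg₁⟩ := hα (box β θ) u (m + 1) (by simp [hS])
  obtain ⟨m₂, z₂, hm₂, hz₂, hmem₂, hseg₂⟩ := hβ θ z₁ m₁ hmem₁
  refine ⟨m₂, z₂, by omega, ⟨z₁, hz₁, hz₂⟩, hmem₂, fun sp δ χ hθ => ?_⟩
  have hstep : B.TraceSeg m (m + 1) ⟨u, comp α β :: sp, δ, χ⟩ ⟨u, α :: β :: sp, δ, χ⟩ false := by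
    refine TraceSeg.single ?_
    rw [hr, hf]
    simp only [RuleApp.tracePair, TraceValue.push, true_and]
    exact Or.inr ⟨⟨u, sp, δ, χ⟩, by simp [TraceValue.toElem, TraceValue.toFormula, hθ], rfl, rfl⟩
  exact (((B.traceSeg_box_self (hθ ▸ h) hnm).trans hstep).trans
    (hseg₁ (β :: sp) δ χ (by simp [hθ]))).trans (hseg₂ sp δ χ hθ)

lemma fulfils_choice {α β : PDLProgram} (hα : B.Fulfils α) (hβ : B.Fulfils β) :
    B.Fulfils (choice α β) := by
  intro θ u n h
  obtain ⟨m, hnm, hr⟩ := B.exists_schedRuleSuc (isNonAtomic_box _ _) h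
  have hprem := B.prem_path m
  rw [hr] at hprem
  set γ := if B.f m = 0 then α else β
  obtain ⟨hγ, hsub, hmem⟩ : B.Fulfils γ ∧
      γ.sem (templateModel B.ant) ⊆ (choice α β).sem (templateModel B.ant) ∧
      lab u (box γ θ) ∈ (B.S (m + 1)).suc := by
    rcases List.getElem?_pair_eq_some hprem with ⟨hf, hS⟩ | ⟨hf, hS⟩ <;>
      simp only [γ, hf, hS] <;>
      exact ⟨by assumption, fun _ => by simp +contextual [PDLProgram.sem], by simp⟩
  obtain ⟨m₁, z, hm₁, hz, hmem₁, hseg₁⟩ := hγ θ u (m + 1) hmem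
  refine ⟨m₁, z, by omega, hsub hz, hmem₁, fun sp δ χ hθ => ?_⟩
  have hstep : B.TraceSeg m (m + 1) ⟨u, choice α β :: sp, δ, χ⟩ ⟨u, γ :: sp, δ, χ⟩ false := by
    refine TraceSeg.single ?_
    rw [hr]
    refine ⟨(List.getElem?_eq_some_iff.1 hprem).1, Or.inr ⟨⟨u, sp, δ, χ⟩, ?_, rfl, rfl⟩⟩
    simp [TraceValue.toElem, TraceValue.toFormula, hθ]
  exact ((B.traceSeg_box_self (hθ ▸ h) hnm).trans hstep).trans (hseg₁ sp δ χ hθ)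

lemma fulfils_test {χ : PDLFormula}
    (hχ : ∀ x, lab x χ ∈ B.ant → x ∈ χ.sem (templateModel B.ant)) : B.Fulfils (test χ) := by
  intro θ u n h
  obtain ⟨m, hnm, hr⟩ := B.exists_schedRuleSuc (isNonAtomic_box _ _) h
  have hprem := B.prem_path m
  rw [hr] at hprem
  obtain ⟨hf, hS⟩ := List.getElem?_singleton_eq_some hprem
  refine ⟨m + 1, u, by omega, ⟨rfl, hχ u ⟨m + 1, by simp [hS]⟩⟩, by simp [hS],
    fun sp δ χ' hθ => (B.traceSeg_box_self (hθ ▸ h) hnm).trans (TraceSeg.single ?_)⟩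
  rw [hr, hf]
  simp [RuleApp.tracePair, TraceValue.toElem, TraceValue.toFormula, TraceValue.push, hθ]

/-- If `u : [γ*]θ` were never fulfilled, unfolding it forever would follow the branch with an
infinitely progressing trace. -/
lemma fulfils_star {γ : PDLProgram} (hγ : B.Fulfils γ) : B.Fulfils (star γ) := by
  intro θ u n h
  by_contra hnot
  -- `(k, v)`: by step `k` the unfolding of `u : [γ*]θ` has reached `v : [γ*]θ`
  let Q : ℕ × Label → Prop := fun p =>
    n ≤ p.1 ∧ lab p.2 (box (star γ) θ) ∈ (B.S p.1).suc ∧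
    Relation.ReflTransGen (fun s t => (s, t) ∈ γ.sem (templateModel B.ant)) u p.2 ∧
    ∀ sp δ χ, sp.foldr box (box (star δ) χ) = θ →
      B.TraceSeg n p.1 ⟨u, star γ :: sp, δ, χ⟩ ⟨p.2, star γ :: sp, δ, χ⟩ false
  have hstep : ∀ s : Subtype Q, ∃ s' : Subtype Q,
      B.TraceSeg s.1.1 s'.1.1 ⟨s.1.2, [], γ, θ⟩ ⟨s'.1.2, [], γ, θ⟩ true := by
    rintro ⟨⟨k, v⟩, hnk, hmem, hreach, hseg⟩
    obtain ⟨m, hkm, hr⟩ := B.exists_schedRuleSuc (isNonAtomic_box _ _) hmem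
    have hprem := B.prem_path m
    rw [hr] at hprem
    rcases List.getElem?_pair_eq_some hprem with ⟨hf, hS⟩ | ⟨hf, hS⟩
    · refine (hnot ⟨m + 1, v, by omega, hreach, by simp [hS], fun sp δ χ hθ => ?_⟩).elim
      refine ((hseg sp δ χ hθ).trans (B.traceSeg_box_self (hθ ▸ hmem) hkm)).trans
        (TraceSeg.single ?_)
      rw [hr, hf]
      exact Or.inl ⟨rfl, Or.inr ⟨by simp [TraceValue.toElem, TraceValue.toFormula, hθ], rfl⟩⟩
    obtain ⟨m₁, z, hm₁, hz, hmem₁, hseg₁⟩ := hγ (box (star γ) θ) v (m + 1) (by simp [hS])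
    refine ⟨⟨(m₁, z), by omega, hmem₁, hreach.tail hz, fun sp δ χ hθ => ?_⟩, ?_⟩
    · refine (((hseg sp δ χ hθ).trans (B.traceSeg_box_self (hθ ▸ hmem) hkm)).trans
        (TraceSeg.single ?_)).trans (hseg₁ (star γ :: sp) δ χ (by simp [hθ]))
      rw [hr, hf]
      exact Or.inr ⟨rfl, Or.inr ⟨by simp [TraceValue.toElem, TraceValue.toFormula, hθ], rfl⟩⟩
    · refine ((B.traceSeg_self hmem hkm).trans (TraceSeg.single_progressing ?_ ?_)).trans
        (hseg₁ [] γ θ rfl)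
      · rw [hr, hf]
        exact Or.inr ⟨rfl, Or.inr ⟨rfl, rfl⟩⟩
      · rw [hr, hf]
        exact ⟨rfl, rfl, rfl⟩
  choose F hF using hstep
  let s₀ : Subtype Q := ⟨(n, u), le_rfl, h, .refl, fun _ _ _ _ => TraceSeg.refl _ _⟩
  exact B.not_forall_traceSeg (fun i => (F^[i] s₀).1.1) (fun i => ⟨(F^[i] s₀).1.2, [], γ, θ⟩)
    fun i => by simpa only [Function.iterate_succ_apply'] using hF (F^[i] s₀)


variable (B)

def BoxClosed (α : PDLProgram) : Prop :=
  ∀ ψ x y, lab x (box α ψ) ∈ B.ant → (x, y) ∈ α.sem (templateModel B.ant) → lab y ψ ∈ B.ant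

variable {B}

lemma boxClosed_atom (a : ℕ) : B.BoxClosed (atom a) :=
  fun _ _ _ hx hy => B.mem_ant_of_box_atom hx hy

lemma boxClosed_comp {α β : PDLProgram} (hα : B.BoxClosed α) (hβ : B.BoxClosed β) :
    B.BoxClosed (comp α β) :=
  fun ψ x y hx ⟨t, hxt, hty⟩ => hβ ψ t y (hα _ x t (B.hintikkaAnt hx) hxt) hty

lemma boxClosed_choice {α β : PDLProgram} (hα : B.BoxClosed α) (hβ : B.BoxClosed β) :
    B.BoxClosed (choice α β) :=
  fun ψ x y hx hxy => hxy.elim (hα ψ x y (B.hintikkaAnt hx).1) (hβ ψ x y (B.hintikkaAnt hx).2)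

lemma boxClosed_test {χ : PDLFormula}
    (hχ : ∀ x, lab x χ ∈ B.suc → x ∉ χ.sem (templateModel B.ant)) : B.BoxClosed (test χ) := by
  rintro ψ x y hx ⟨hxy, hχx⟩
  obtain rfl : x = y := hxy
  exact (B.hintikkaAnt hx).resolve_left fun h => hχ _ h hχx

lemma boxClosed_star {γ : PDLProgram} (hγ : B.BoxClosed γ) : B.BoxClosed (star γ) := by
  intro ψ x y hx hxy
  change Relation.ReflTransGen _ x y at hxy
  suffices lab y (box (star γ) ψ) ∈ B.ant from (B.hintikkaAnt this).1
  induction hxy with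
  | refl => exact hx
  | tail _ hst ih => exact hγ _ _ _ (B.hintikkaAnt ih).2 hst

variable (B)

mutual

theorem truth_lemma : ∀ φ : PDLFormula,
    (∀ x, lab x φ ∈ B.ant → x ∈ φ.sem (templateModel B.ant)) ∧
    (∀ x, lab x φ ∈ B.suc → x ∉ φ.sem (templateModel B.ant))
  | .bot => ⟨fun x hx => (B.bot_not_mem_ant x hx).elim, fun _ _ h => h⟩
  | .atom _ => ⟨fun _ hx => hx, fun _ hx h => B.not_mem_suc_of_mem_ant h hx⟩
  | .and φ ψ => by
    obtain ⟨ihφ, ihφ'⟩ := truth_lemma φ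
    obtain ⟨ihψ, ihψ'⟩ := truth_lemma ψ
    exact ⟨fun x hx => ⟨ihφ x (B.hintikkaAnt hx).1, ihψ x (B.hintikkaAnt hx).2⟩,
      fun x hx h => (B.hintikkaSuc hx).elim (ihφ' x · h.1) (ihψ' x · h.2)⟩
  | .or φ ψ => by
    obtain ⟨ihφ, ihφ'⟩ := truth_lemma φ
    obtain ⟨ihψ, ihψ'⟩ := truth_lemma ψ
    exact ⟨fun x hx => (B.hintikkaAnt hx).imp (ihφ x) (ihψ x),
      fun x hx h => h.elim (ihφ' x (B.hintikkaSuc hx).1) (ihψ' x (B.hintikkaSuc hx).2)⟩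
  | .imp φ ψ => by
    obtain ⟨ihφ, ihφ'⟩ := truth_lemma φ
    obtain ⟨ihψ, ihψ'⟩ := truth_lemma ψ
    exact ⟨fun x hx => (B.hintikkaAnt hx).imp (ihφ' x) (ihψ x),
      fun x hx h => h.elim (· (ihφ x (B.hintikkaSuc hx).1)) (ihψ' x (B.hintikkaSuc hx).2)⟩
  | .box α ψ => by
    obtain ⟨ihψ, ihψ'⟩ := truth_lemma ψ
    refine ⟨fun x hx y hxy => ihψ y (boxClosed α ψ x y hx hxy), fun x ⟨n, hx⟩ h => ?_⟩
    obtain ⟨m, z, -, hxz, hz, -⟩ := fulfils α ψ x n hx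
    exact ihψ' z ⟨m, hz⟩ (h z hxz)

theorem boxClosed : ∀ α : PDLProgram, B.BoxClosed α
  | .atom a => boxClosed_atom a
  | .comp α β => boxClosed_comp (boxClosed α) (boxClosed β)
  | .choice α β => boxClosed_choice (boxClosed α) (boxClosed β)
  | .test χ => boxClosed_test (truth_lemma χ).2
  | .star γ => boxClosed_star (boxClosed γ)

theorem fulfils : ∀ α : PDLProgram, B.Fulfils α
  | .atom a => B.fulfils_atom a
  | .comp α β => fulfils_comp (fulfils α) (fulfils β)
  | .choice α β => fulfils_choice (fulfils α) (fulfils β)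
  | .test χ => fulfils_test (truth_lemma χ).1
  | .star γ => fulfils_star (fulfils γ)

end

theorem countermodel :
    (∀ A ∈ B.ant, A.sat (templateModel B.ant) fun x => x) ∧
    (∀ A ∈ B.suc, ¬ A.sat (templateModel B.ant) fun x => x) := by
  constructor
  · rintro (⟨x, a, y⟩ | ⟨x, φ⟩) hA
    exacts [hA, (B.truth_lemma φ).1 x hA]
  · rintro (⟨x, a, y⟩ | ⟨x, φ⟩) hA hsat
    exacts [B.not_mem_suc_of_mem_ant hsat hA, (B.truth_lemma φ).2 x hA hsat]

end SearchBranch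

lemma IsSearchTree.countermodel_of_openLeaf {σ : ℕ → Label × PDLFormula} {S₀ : Sequent}
    {D : Deriv} (hσ : IsSchedule σ) (hD : IsSearchTree σ S₀ D) {p : List ℕ} {S : Sequent}
    (hleaf : D.node p = some (Sum.inr S)) :
    (∀ A ∈ (S.ant : Set SeqElem), A.sat (templateModel S.ant) fun x => x) ∧
    (∀ A ∈ (S.suc : Set SeqElem), ¬ A.sat (templateModel S.ant) fun x => x) := by
  obtain ⟨st, pend, -, hsteps⟩ := hD.exists_stages
  obtain ⟨S', hS', hncl, hstep⟩ := hsteps p (by simp [hleaf])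
    fun q hq => D.not_closingSubtreeAt_of_openLeaf hleaf hq
  obtain rfl : S' = S := by simpa [Deriv.seqAt, hleaf, DNode.concl] using hS'.symm
  have hnone : ∀ j, st p ≤ j → ¬ SchedApplies (σ j).1 (σ j).2 S' := by
    rcases hstep with ⟨_, _, _, _, _, -, -, -, -, hnode, -⟩ | ⟨-, ⟨j, -, -, -, hbr⟩ | ⟨hnone, -⟩⟩
    · simp [hleaf] at hnode
    · rcases hbr with ⟨-, r, hnode, -⟩ | ⟨-, -, ⟨_, _, -, _, _, -, -, hnode, -⟩ | ⟨-, r, hnode, -⟩⟩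
        <;> simp [hleaf] at hnode
    · exact hnone
  have hinert : ∀ x φ, φ.isNonAtomic → ¬ SchedApplies x φ S' := fun x φ hφ happ => by
    obtain ⟨j, hj, hσj⟩ := hσ.2 x φ hφ (st p)
    exact hnone j hj (by rwa [hσj])
  constructor
  · rintro (⟨x, a, y⟩ | ⟨x, φ⟩) hA
    · exact hA
    rcases φ with _ | _ | _ | _ | _ | ⟨_ | _ | _ | _ | _, ψ⟩
    · exact (hncl (Or.inl ⟨x, hA⟩)).elim
    · exact hA
    all_goals first
      | exact fun y hy => (hinert x _ (isNonAtomic_box _ _) (Or.inr ⟨hA, y, hy⟩)).elim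
      | exact (hinert x _ (by simp [isNonAtomic, isAtomic]) (Or.inr ⟨hA, trivial⟩)).elim
  · rintro (⟨x, a, y⟩ | ⟨x, φ⟩) hA hsat
    · exact hncl (Or.inr ⟨_, hsat, hA⟩)
    rcases φ with _ | _ | _ | _ | _ | _
    · exact hsat
    · exact hncl (Or.inr ⟨_, hsat, hA⟩)
    all_goals exact hinert x _ (by simp [isNonAtomic, isAtomic]) (Or.inl hA)

/-- **Countermodel construction**: for every template `P = (Γ*, Δ*)` induced by a search tree,
the determined model `m_P` with the identity valuation `𝔳` satisfies `m_P, 𝔳 ⊨ A` for all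
`A ∈ Γ*` and `m_P, 𝔳 ⊭ B` for all `B ∈ Δ*`. -/
theorem countermodel_construction (σ : ℕ → Label × PDLFormula) (hσ : IsSchedule σ)
    (S₀ : Sequent) (D : Deriv) (hD : IsSearchTree σ S₀ D)
    (Γs Δs : Set SeqElem) (hT : Template D Γs Δs) :
    (∀ A ∈ Γs, SeqElem.sat (templateModel Γs) (fun x => x) A) ∧
    (∀ B ∈ Δs, ¬ SeqElem.sat (templateModel Γs) (fun x => x) B) := by
  rcases hT with ⟨p, S, hleaf, rfl, rfl⟩ | ⟨f, hf, huntraced, rfl, rfl⟩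
  · exact hD.countermodel_of_openLeaf hσ hleaf
  · obtain ⟨B, hS⟩ := hD.exists_branch hσ hf huntraced
    have hset : ∀ side : Sequent → Finset SeqElem,
        {A | ∃ n S, D.seqAt (pathAddr f n) = some S ∧ A ∈ side S} = {A | ∃ n, A ∈ side (B.S n)} :=
      fun side => by simp [hS]
    rw [hset Sequent.ant, hset Sequent.suc]
    exact B.countermodel
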